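/- arXiv:1409.1794 — 5 statements merged into one kernel-verified Lean document; each statement's English description precedes it below -/
import Mathlib

section
/- Let k > 0 and z̄ > 0. Then there exists κ₀ > 0 such that for every κ ≥ κ₀ there exists t̄ ∈ (0, z̄) with Ψ'(t̄) - κ Ψ'(k + t̄) = 0. -/
/-!
By the log-convexity of `Γ` (Bohr–Mollerup) the trigamma function `Ψ'` is nonnegative on
`(0, ∞)`, so the recurrence `Ψ'(x) = Ψ'(x + 1) + 1 / x²` gives `Ψ'(x) ≥ 1 / x²`; in particular
`Ψ'` is positive and tends to `+∞` at `0⁺`. Hence `f(t) = Ψ'(t) - κ Ψ'(k + t)` tends to `+∞`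
at `0⁺`, while `f(z̄ / 2) < 0` as soon as `κ ≥ 2 Ψ'(z̄ / 2) / Ψ'(k + z̄ / 2)`; the intermediate
value theorem gives the zero.
-/

/-- The digamma function `Ψ(x) = (log Γ)'(x)`. -/
noncomputable def digamma (x : ℝ) : ℝ :=
  deriv (fun y => Real.log (Real.Gamma y)) x

open Filter Topology Set

theorem exists_mem_Ioo_eq_zero_of_tendsto_atTop {f : ℝ → ℝ} {a b : ℝ} (hab : a < b)
    (hf : ContinuousOn f (Ioc a b)) (hlim : Tendsto f (𝓝[>] a) atTop) (hb : f b < 0) :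
    ∃ t ∈ Ioo a b, f t = 0 := by
  obtain ⟨t₀, hft₀, ht₀⟩ : ∃ t₀, 0 < f t₀ ∧ t₀ ∈ Ioo a b :=
    ((hlim.eventually_gt_atTop 0).and (Ioo_mem_nhdsGT hab)).exists
  obtain ⟨t, ht, hft⟩ :=
    intermediate_value_Ioo' ht₀.2.le (hf.mono (Icc_subset_Ioc ht₀.1 le_rfl)) ⟨hb, hft₀⟩
  exact ⟨t, ⟨ht₀.1.trans ht.1, ht.2⟩, hft⟩

theorem exists_sub_mul_comp_add_eq_zero {φ : ℝ → ℝ} (hφ : ContinuousOn φ (Ioi 0))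
    (hpos : ∀ x, 0 < x → 0 < φ x) (hlim : Tendsto φ (𝓝[>] 0) atTop) {k z : ℝ} (hk : 0 < k)
    (hz : 0 < z) :
    ∃ κ₀ > (0 : ℝ), ∀ κ ≥ κ₀, ∃ t ∈ Ioo 0 z, φ t - κ * φ (k + t) = 0 := by
  have hz2 : 0 < z / 2 := half_pos hz
  have hkz2 : 0 < φ (k + z / 2) := hpos _ (by positivity)
  refine ⟨2 * φ (z / 2) / φ (k + z / 2), by have := hpos _ hz2; positivity, fun κ hκ => ?_⟩
  have hcont : ContinuousOn (fun t => φ t - κ * φ (k + t)) (Ioc 0 (z / 2)) :=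
    (hφ.mono Ioc_subset_Ioi_self).sub <| continuousOn_const.mul <|
      hφ.comp (continuousOn_const.add continuousOn_id) fun t ht => by
        simp only [mem_Ioi]; linarith [ht.1]
  have hshift : Tendsto (fun t => φ (k + t)) (𝓝[>] 0) (𝓝 (φ k)) :=
    ((hφ.continuousAt (Ioi_mem_nhds hk)).tendsto.comp
      ((continuous_const.add continuous_id).tendsto' 0 k (add_zero k))).mono_left
      nhdsWithin_le_nhds
  have hlim' : Tendsto (fun t => φ t - κ * φ (k + t)) (𝓝[>] 0) atTop := by
    simpa only [sub_eq_add_neg] using hlim.atTop_add (hshift.const_mul κ).neg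
  have hneg : φ (z / 2) - κ * φ (k + z / 2) < 0 := by
    have := (div_le_iff₀ hkz2).1 hκ
    linarith [hpos _ hz2]
  obtain ⟨t, ht, hft⟩ := exists_mem_Ioo_eq_zero_of_tendsto_atTop hz2 hcont hlim' hneg
  exact ⟨t, ⟨ht.1, ht.2.trans (half_lt_self hz)⟩, hft⟩

theorem contDiffOn_Gamma {n : WithTop ℕ∞} : ContDiffOn ℝ n Real.Gamma (Ioi 0) := by
  intro x hx
  have hU : IsOpen {s : ℂ | 0 < s.re} := isOpen_lt continuous_const Complex.continuous_re
  have hdiff : DifferentiableOn ℂ Complex.Gamma {s : ℂ | 0 < s.re} := fun s hs =>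
    (Complex.differentiableAt_Gamma s fun m hm => by
      simp only [mem_ofPred_eq, hm, Complex.neg_re, Complex.natCast_re] at hs
      linarith [m.cast_nonneg (α := ℝ)]).differentiableWithinAt
  have hreal := ((hdiff.contDiffOn hU (n := n)).contDiffAt
    (hU.mem_nhds (by simpa using hx))).real_of_complex
  have hGamma : (fun y : ℝ => (Complex.Gamma y).re) = Real.Gamma := by
    funext y
    rw [Complex.Gamma_ofReal, Complex.ofReal_re]
  exact (hGamma ▸ hreal).contDiffWithinAt

theorem contDiffOn_log_Gamma {n : WithTop ℕ∞} :
    ContDiffOn ℝ n (fun x => Real.log (Real.Gamma x)) (Ioi 0) :=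
  contDiffOn_Gamma.log fun _ hx => (Real.Gamma_pos_of_pos hx).ne'

theorem contDiffOn_digamma {n : WithTop ℕ∞} : ContDiffOn ℝ n digamma (Ioi 0) :=
  (contDiffOn_log_Gamma (n := ⊤)).deriv_of_isOpen isOpen_Ioi le_top

theorem differentiableAt_log_Gamma {x : ℝ} (hx : 0 < x) :
    DifferentiableAt ℝ (fun y => Real.log (Real.Gamma y)) x :=
  ((contDiffOn_log_Gamma (n := 1)).differentiableOn one_ne_zero).differentiableAt
    (Ioi_mem_nhds hx)

theorem differentiableAt_digamma {x : ℝ} (hx : 0 < x) : DifferentiableAt ℝ digamma x :=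
  ((contDiffOn_digamma (n := 1)).differentiableOn one_ne_zero).differentiableAt
    (Ioi_mem_nhds hx)

theorem continuousOn_deriv_digamma : ContinuousOn (deriv digamma) (Ioi 0) :=
  (contDiffOn_digamma (n := 1)).continuousOn_deriv_of_isOpen isOpen_Ioi le_rfl

theorem digamma_add_one {x : ℝ} (hx : 0 < x) : digamma (x + 1) = digamma x + x⁻¹ := by
  have h : (fun t => Real.log (Real.Gamma (t + 1))) =ᶠ[𝓝 x]
      fun t => Real.log (Real.Gamma t) + Real.log t := by
    filter_upwards [Ioi_mem_nhds hx] with t ht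
    rw [Real.Gamma_add_one ht.ne', Real.log_mul ht.ne' (Real.Gamma_pos_of_pos ht).ne', add_comm]
  have := h.deriv_eq
  rwa [deriv_comp_add_const (fun y => Real.log (Real.Gamma y)),
    deriv_fun_add (differentiableAt_log_Gamma hx) (Real.differentiableAt_log hx.ne'),
    Real.deriv_log] at this

theorem deriv_digamma_add_one {x : ℝ} (hx : 0 < x) :
    deriv digamma (x + 1) = deriv digamma x - (x ^ 2)⁻¹ := by
  have h : (fun t => digamma (t + 1)) =ᶠ[𝓝 x] fun t => digamma t + t⁻¹ := by
    filter_upwards [Ioi_mem_nhds hx] with t ht using digamma_add_one ht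
  have := h.deriv_eq
  rw [deriv_comp_add_const, deriv_fun_add (differentiableAt_digamma hx)
    (differentiableAt_inv hx.ne'), deriv_inv] at this
  rw [this, sub_eq_add_neg]

theorem monotoneOn_digamma : MonotoneOn digamma (Ioi 0) :=
  Real.convexOn_log_Gamma.monotoneOn_deriv fun _ hx => differentiableAt_log_Gamma hx

theorem deriv_digamma_nonneg {x : ℝ} (hx : 0 < x) : 0 ≤ deriv digamma x := by
  rw [← derivWithin_of_isOpen isOpen_Ioi hx]
  exact monotoneOn_digamma.derivWithin_nonneg

theorem inv_sq_le_deriv_digamma {x : ℝ} (hx : 0 < x) : (x ^ 2)⁻¹ ≤ deriv digamma x := by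
  have := deriv_digamma_nonneg (x := x + 1) (by linarith)
  rw [deriv_digamma_add_one hx] at this
  linarith

theorem deriv_digamma_pos {x : ℝ} (hx : 0 < x) : 0 < deriv digamma x :=
  (inv_pos.2 (pow_pos hx 2)).trans_le (inv_sq_le_deriv_digamma hx)

theorem tendsto_deriv_digamma_nhdsGT_zero : Tendsto (deriv digamma) (𝓝[>] 0) atTop := by
  have hsq : Tendsto (fun x : ℝ => x ^ 2) (𝓝[>] 0) (𝓝[>] 0) :=
    tendsto_nhdsWithin_of_tendsto_nhds_of_eventually_within _
      (((continuous_pow 2).tendsto' 0 0 (by simp)).mono_left nhdsWithin_le_nhds)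
      (eventually_nhdsWithin_of_forall fun _ hx => pow_pos (mem_Ioi.1 hx) 2)
  exact tendsto_atTop_mono' _
    (eventually_nhdsWithin_of_forall fun x hx => inv_sq_le_deriv_digamma hx)
    hsq.inv_tendsto_nhdsGT_zero

/-- For any `k > 0` and `z̄ > 0`, if `κ` is sufficiently large then there exists
`t̄ ∈ (0, z̄)` with `Ψ'(t̄) - κ Ψ'(k + t̄) = 0`. -/
theorem exists_critical_point (k z : ℝ) (hk : 0 < k) (hz : 0 < z) :
    ∃ κ₀ > (0 : ℝ), ∀ κ ≥ κ₀, ∃ t ∈ Set.Ioo (0 : ℝ) z,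
      deriv digamma t - κ * deriv digamma (k + t) = 0 :=
  exists_sub_mul_comp_add_eq_zero continuousOn_deriv_digamma (fun _ => deriv_digamma_pos)
    tendsto_deriv_digamma_nhdsGT_zero hk hz
end

section
/- Let k, θ > 0 and let {Y(t,n)} for (t,n) ∈ ℤ_{≥0}×ℕ be i.i.d. random variables with Gamma(k,θ) distribution. Define Z(0,n) = 1 if n=1 and 0 otherwise, Z(t,0)=0, and Z(t+1,n) = Y(t,n) Z(t,n) + Z(t,n-1). For integers n₁ ≥ n₂ ≥ … ≥ n_K ≥ 1, set u(t, n⃗) = E[ Π_{i=1}^{K} Z(t, n_i) ] (which is finite). Suppose the coordinates of n⃗ are constant on L consecutive blocks of sizes c₁,…,c_L and strictly decreasing from each block to the next. Then u(t+1, n⃗) = Σ_{A ⊆ {1,…,K}} ( Π_{i=1}^{L} m_{c_i^A} ) · u(t, n⃗^A), where c_i^A is the number of elements of A lying in the i-th block, n⃗^A is obtained from n⃗ by decreasing by 1 each coordinate in the last c_i - c_i^A positions of the i-th block (for every i), and m_j = θ^j Π_{l=0}^{j-1}(k+l) with m₀ = 1. -/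
/-!
Expanding `∏ᵢ Z(t+1, nᵢ) = ∏ᵢ (Y(t, nᵢ) Z(t, nᵢ) + Z(t, nᵢ - 1))` gives a sum over the sets `A`
of indices at which the weight is picked. The partition functions at time `t` only depend on the
weights of earlier times, so they are independent of the weights at time `t` and every term
factorises. Indices with equal coordinates pick the same weight, so the weight part is a product
of powers of independent Gamma variables, with mean `∏ m_{c_i^A}`; and in the remaining factor only
the number of kept coordinates of each block matters, which turns it into `u(t, n⃗^A)`.
Integrability comes from the same expansion, by induction on `t`.
-/

open MeasureTheory ProbabilityTheory

/-- The `j`-th moment `m_j = θ^j ∏_{l=0}^{j-1} (k+l)` of the Gamma(k,θ) distribution. -/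
noncomputable def gammaMoment (k θ : ℝ) (j : ℕ) : ℝ :=
  θ ^ j * ∏ l ∈ Finset.range j, (k + l)

/-- `n⃗^A`: within each block of equal coordinates of the weakly decreasing vector `n⃗`,
the first `c_i^A = #(A ∩ block)` coordinates are kept and the remaining (last) ones
are decreased by `1`. -/
def vecA {K : ℕ} (n : Fin K → ℕ) (A : Finset (Fin K)) (i : Fin K) : ℕ :=
  if (Finset.univ.filter (fun j : Fin K => n j = n i ∧ j < i)).card <
      (A.filter (fun j => n j = n i)).card
  then n i else n i - 1

open Finset

lemma Real.Gamma_add_nat_eq_prod_mul {k : ℝ} (hk : 0 < k) (c : ℕ) :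
    Real.Gamma (k + c) = (∏ l ∈ range c, (k + l)) * Real.Gamma k := by
  induction c with
  | zero => simp
  | succ c ih =>
    rw [Nat.cast_succ, ← add_assoc, Real.Gamma_add_one (by positivity), ih,
      prod_range_succ]
    ring

lemma gammaPDFReal_mul_pow {k θ x : ℝ} (hk : 0 < k) (hθ : 0 < θ) (hx : x ≠ 0) (c : ℕ) :
    x ^ c * gammaPDFReal k (1 / θ) x = gammaMoment k θ c * gammaPDFReal (k + c) (1 / θ) x := by
  rcases hx.lt_or_gt with hneg | hpos
  · simp [gammaPDFReal, hneg.not_ge]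
  simp only [gammaPDFReal, if_pos hpos.le, gammaMoment, Real.Gamma_add_nat_eq_prod_mul hk,
    add_sub_right_comm, Real.rpow_add hpos, Real.rpow_add (by positivity : (0:ℝ) < 1 / θ),
    Real.rpow_natCast]
  field_simp
  rw [← mul_pow, mul_one_div_cancel hθ.ne', one_pow]

lemma measurable_gammaPDF (a r : ℝ) : Measurable (gammaPDF a r) :=
  (measurable_gammaPDFReal a r).ennreal_ofReal

lemma integrable_gammaMeasure_iff {a r : ℝ} (ha : 0 < a) (hr : 0 < r) {g : ℝ → ℝ} :
    Integrable g (gammaMeasure a r) ↔ Integrable (fun x => gammaPDFReal a r x * g x) := by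
  rw [gammaMeasure, integrable_withDensity_iff_integrable_smul'
    (measurable_gammaPDF a r) (ae_of_all _ fun _ => ENNReal.ofReal_lt_top)]
  simp only [gammaPDF, ENNReal.toReal_ofReal (gammaPDFReal_nonneg ha hr _), smul_eq_mul]

lemma integral_gammaMeasure {a r : ℝ} (ha : 0 < a) (hr : 0 < r) (g : ℝ → ℝ) :
    ∫ x, g x ∂gammaMeasure a r = ∫ x, gammaPDFReal a r x * g x := by
  rw [gammaMeasure, integral_withDensity_eq_integral_toReal_smul
    (measurable_gammaPDF a r) (ae_of_all _ fun _ => ENNReal.ofReal_lt_top)]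
  simp only [gammaPDF, ENNReal.toReal_ofReal (gammaPDFReal_nonneg ha hr _), smul_eq_mul]

lemma integrable_gammaPDFReal {a r : ℝ} (ha : 0 < a) (hr : 0 < r) :
    Integrable (gammaPDFReal a r) := by
  have := isProbabilityMeasure_gammaMeasure ha hr
  simpa using (integrable_gammaMeasure_iff ha hr).mp (integrable_const (1 : ℝ))

lemma integral_gammaPDFReal {a r : ℝ} (ha : 0 < a) (hr : 0 < r) :
    ∫ x, gammaPDFReal a r x = 1 := by
  have := isProbabilityMeasure_gammaMeasure ha hr
  simpa using (integral_gammaMeasure ha hr fun _ => 1).symm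

lemma gammaPDFReal_mul_pow_ae {k θ : ℝ} (hk : 0 < k) (hθ : 0 < θ) (c : ℕ) :
    (fun x => gammaPDFReal k (1 / θ) x * x ^ c) =ᵐ[volume]
      fun x => gammaMoment k θ c * gammaPDFReal (k + c) (1 / θ) x := by
  filter_upwards [Measure.ae_ne volume 0] with x hx
  rw [mul_comm, gammaPDFReal_mul_pow hk hθ hx]

lemma integrable_pow_gammaMeasure {k θ : ℝ} (hk : 0 < k) (hθ : 0 < θ) (c : ℕ) :
    Integrable (fun x => x ^ c) (gammaMeasure k (1 / θ)) := by
  rw [integrable_gammaMeasure_iff hk (by positivity)]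
  exact ((integrable_gammaPDFReal (by positivity) (by positivity)).const_mul _).congr
    (gammaPDFReal_mul_pow_ae hk hθ c).symm

lemma integral_pow_gammaMeasure {k θ : ℝ} (hk : 0 < k) (hθ : 0 < θ) (c : ℕ) :
    ∫ x, x ^ c ∂gammaMeasure k (1 / θ) = gammaMoment k θ c := by
  rw [integral_gammaMeasure hk (by positivity),
    integral_congr_ae (gammaPDFReal_mul_pow_ae hk hθ c), integral_const_mul,
    integral_gammaPDFReal (by positivity) (by positivity), mul_one]

lemma card_filter_card_filter_lt_lt {α : Type*} [LinearOrder α] (B : Finset α) (r : ℕ) :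
    #{i ∈ B | #{j ∈ B | j < i} < r} = min r #B := by
  induction B using Finset.induction_on_max with
  | empty => simp
  | insert a s has ih =>
    have ha : a ∉ s := fun h => lt_irrefl a (has a h)
    have hbelow : ∀ i ∈ s, {j ∈ insert a s | j < i} = {j ∈ s | j < i} := fun i hi => by
      rw [filter_insert, if_neg (has i hi).not_gt]
    have hall : {j ∈ insert a s | j < a} = s := by
      rw [filter_insert, if_neg (lt_irrefl a), filter_true_of_mem has]
    rw [filter_insert, hall, filter_congr (p := fun i => #{j ∈ insert a s | j < i} < r)
      (fun i hi => by rw [hbelow i hi]), card_insert_of_notMem ha]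
    split_ifs with h
    · rw [card_insert_of_notMem (by simp [ha]), ih]
      omega
    · omega

lemma prod_vecA {K : ℕ} (n : Fin K → ℕ) (A : Finset (Fin K)) {M : Type*} [CommMonoid M]
    (g : ℕ → M) :
    ∏ i, g (vecA n A i) = (∏ i ∈ A, g (n i)) * ∏ i ∈ Aᶜ, g (n i - 1) := by
  have hmaps : ∀ s : Finset (Fin K), ∀ i ∈ s, n i ∈ univ.image n :=
    fun _ i _ => mem_image_of_mem n (mem_univ i)
  rw [← prod_fiberwise_of_maps_to (hmaps univ), ← prod_fiberwise_of_maps_to' (hmaps A) g,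
    ← prod_fiberwise_of_maps_to' (hmaps Aᶜ) (fun v => g (v - 1)), ← prod_mul_distrib]
  refine prod_congr rfl fun v _ => ?_
  set B : Finset (Fin K) := {i | n i = v}
  set r := #{i ∈ A | n i = v}
  have hrB : r ≤ #B := card_le_card (filter_subset_filter _ (subset_univ A))
  have hcompl : {i ∈ Aᶜ | n i = v} = B \ {i ∈ A | n i = v} := by
    ext i
    simp only [mem_filter, mem_compl, mem_sdiff, mem_univ, true_and, B]
    tauto
  have hrank : ∀ i ∈ B, vecA n A i = if #{j ∈ B | j < i} < r then v else v - 1 := by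
    intro i hi
    have hni : n i = v := (mem_filter.mp hi).2
    simp only [vecA, hni, B, r, filter_filter]
  rw [prod_congr rfl fun i hi => congrArg g (hrank i hi), prod_apply_ite, prod_const, prod_const,
    card_filter_card_filter_lt_lt, min_eq_left hrB, prod_const, prod_const, hcompl,
    card_sdiff_of_subset (filter_subset_filter _ (subset_univ A)), filter_not,
    card_sdiff_of_subset (filter_subset _ _), card_filter_card_filter_lt_lt, min_eq_left hrB]

namespace ProbabilityTheory

variable {Ω ι : Type*} [MeasurableSpace Ω] {P : Measure Ω}

lemma iIndepFun.integrable_prod_and_integral_prod [IsProbabilityMeasure P]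
    {X : ι → Ω → ℝ} (hX : iIndepFun X P) (hmeas : ∀ i, Measurable (X i)) (s : Finset ι)
    (hint : ∀ i ∈ s, Integrable (X i) P) :
    Integrable (fun ω => ∏ i ∈ s, X i ω) P ∧
      ∫ ω, ∏ i ∈ s, X i ω ∂P = ∏ i ∈ s, ∫ ω, X i ω ∂P := by
  classical
  induction s using Finset.induction_on with
  | empty => simp
  | insert a s ha ih =>
    obtain ⟨hint_s, hintegral_s⟩ := ih fun i hi => hint i (mem_insert_of_mem hi)
    have hindep : IndepFun (fun ω => ∏ i ∈ s, X i ω) (X a) P := by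
      simpa only [← Finset.prod_apply] using hX.indepFun_finsetProd_of_notMem hmeas ha
    have hint_a := hint a (mem_insert_self a s)
    simp only [prod_insert ha]
    refine ⟨hindep.symm.integrable_mul hint_a hint_s, ?_⟩
    rw [← hintegral_s, ← hindep.symm.integral_fun_mul_eq_mul_integral
      hint_a.aestronglyMeasurable hint_s.aestronglyMeasurable]

lemma iIndepFun.indepFun_of_measurable_biSup {β : ι → Type*}
    [∀ i, MeasurableSpace (β i)] {f : ∀ i, Ω → β i} (hmeas : ∀ i, Measurable (f i))
    (hf : iIndepFun f P) {S T : Set ι} (hST : Disjoint S T) {γ δ : Type*} [MeasurableSpace γ]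
    [MeasurableSpace δ] {X : Ω → γ} {V : Ω → δ}
    (hX : Measurable[⨆ i ∈ S, MeasurableSpace.comap (f i) inferInstance] X)
    (hV : Measurable[⨆ i ∈ T, MeasurableSpace.comap (f i) inferInstance] V) :
    IndepFun X V P := by
  rw [IndepFun_iff_Indep]
  exact indep_of_indep_of_le_left
    (indep_of_indep_of_le_right
      (indep_iSup_of_disjoint (fun i => (hmeas i).comap_le) hf.iIndep hST)
      (measurable_iff_comap_le.mp hV))
    (measurable_iff_comap_le.mp hX)

end ProbabilityTheory

section StrictWeakPolymer

variable {Ω : Type*} {Y Z : ℕ → ℕ → Ω → ℝ}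

abbrev weightSigma (Y : ℕ → ℕ → Ω → ℝ) (S : Set (ℕ × {m : ℕ // 1 ≤ m})) : MeasurableSpace Ω :=
  ⨆ p ∈ S, MeasurableSpace.comap (Y p.1 p.2) inferInstance

lemma measurable_weightSigma {S : Set (ℕ × {m : ℕ // 1 ≤ m})} {p : ℕ × {m : ℕ // 1 ≤ m}}
    (hp : p ∈ S) : Measurable[weightSigma Y S] (Y p.1 p.2) :=
  measurable_iff_comap_le.mpr (le_biSup (fun p => MeasurableSpace.comap (Y p.1 p.2) _) hp)

lemma measurable_partition_weightSigma_lt (hZ0 : ∀ n ω, Z 0 n ω = if n = 1 then 1 else 0)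
    (hZbot : ∀ t ω, Z t 0 ω = 0)
    (hZrec : ∀ t n ω, Z (t + 1) (n + 1) ω = Y t (n + 1) ω * Z t (n + 1) ω + Z t n ω)
    (t m : ℕ) : Measurable[weightSigma Y {p | p.1 < t}] (Z t m) := by
  induction t generalizing m with
  | zero =>
    rw [funext (hZ0 m)]
    exact measurable_const
  | succ t ih =>
    have hmono : weightSigma Y {p | p.1 < t} ≤ weightSigma Y {p | p.1 < t + 1} :=
      biSup_mono fun p (hp : p.1 < t) => Nat.lt_succ_of_lt hp
    cases m with
    | zero =>
      rw [funext (hZbot (t + 1))]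
      exact measurable_const
    | succ m =>
      rw [funext (hZrec t m)]
      have hY := measurable_weightSigma (Y := Y) (p := (t, ⟨m + 1, m.succ_pos⟩))
        (S := {p | p.1 < t + 1}) t.lt_succ_self
      exact (hY.mul ((ih (m + 1)).mono hmono le_rfl)).add ((ih m).mono hmono le_rfl)

lemma prod_partition_succ_eq_sum
    (hZrec : ∀ t n ω, Z (t + 1) (n + 1) ω = Y t (n + 1) ω * Z t (n + 1) ω + Z t n ω)
    (t : ℕ) {K : ℕ} {f : Fin K → ℕ} (hf : ∀ i, 1 ≤ f i) (ω : Ω) :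
    ∏ i, Z (t + 1) (f i) ω =
      ∑ A : Finset (Fin K), (∏ i ∈ A, Y t (f i) ω) * ∏ i, Z t (vecA f A i) ω := by
  have hstep : ∀ i, Z (t + 1) (f i) ω = Y t (f i) ω * Z t (f i) ω + Z t (f i - 1) ω := fun i => by
    obtain ⟨m, hm⟩ := Nat.exists_eq_add_of_le' (hf i)
    rw [hm, hZrec, Nat.add_sub_cancel]
  rw [prod_congr rfl fun i _ => hstep i, prod_add, powerset_univ]
  refine sum_congr rfl fun A _ => ?_
  rw [prod_vecA f A (fun m => Z t m ω), prod_mul_distrib, mul_assoc, compl_eq_univ_sdiff]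

variable [MeasurableSpace Ω] {P : Measure Ω} {k θ : ℝ}

lemma integrable_pow_and_integral_of_map_eq_gammaMeasure (hk : 0 < k) (hθ : 0 < θ) {X : Ω → ℝ}
    (hX : Measurable X) (hmap : P.map X = gammaMeasure k (1 / θ)) (c : ℕ) :
    Integrable (fun ω => X ω ^ c) P ∧ ∫ ω, X ω ^ c ∂P = gammaMoment k θ c := by
  have hpow : AEStronglyMeasurable (fun x : ℝ => x ^ c) (P.map X) :=
    (measurable_id.pow_const c).aestronglyMeasurable
  refine ⟨(integrable_map_measure hpow hX.aemeasurable).mp ?_, ?_⟩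
  · rw [hmap]
    exact integrable_pow_gammaMeasure hk hθ c
  · rw [← integral_map hX.aemeasurable hpow, hmap, integral_pow_gammaMeasure hk hθ c]

lemma integrable_prod_weights_and_integral [IsProbabilityMeasure P] (hk : 0 < k) (hθ : 0 < θ)
    (hYmeas : ∀ t n, Measurable (Y t n))
    (hYindep : iIndepFun (fun p : ℕ × {m : ℕ // 1 ≤ m} => Y p.1 p.2) P)
    (hYdist : ∀ t n, 1 ≤ n → P.map (Y t n) = gammaMeasure k (1 / θ))
    (t : ℕ) {K : ℕ} {f : Fin K → ℕ} (hf : ∀ i, 1 ≤ f i) (A : Finset (Fin K)) :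
    Integrable (fun ω => ∏ i ∈ A, Y t (f i) ω) P ∧
      ∫ ω, ∏ i ∈ A, Y t (f i) ω ∂P = ∏ v ∈ univ.image f, gammaMoment k θ #{i ∈ A | f i = v} := by
  set c : ℕ → ℕ := fun v => #{i ∈ A | f i = v}
  set T : Finset (ℕ × {m : ℕ // 1 ≤ m}) :=
    ((univ.image f).subtype (1 ≤ ·)).map ⟨Prod.mk t, Prod.mk_right_injective t⟩
  have hT : ∀ F : ℕ → ℕ → ℝ, ∏ p ∈ T, F p.1 p.2 = ∏ v ∈ univ.image f, F t v := fun F => by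
    rw [prod_map]
    exact prod_subtype_of_mem (F t) (by simpa using hf)
  have hgroup : ∀ ω, ∏ i ∈ A, Y t (f i) ω = ∏ p ∈ T, Y p.1 p.2 ω ^ c p.2 := fun ω => by
    rw [hT fun s v => Y s v ω ^ c v, ← prod_fiberwise_of_maps_to'
      (fun i _ => mem_image_of_mem f (mem_univ i)) (fun v => Y t v ω)]
    simp only [prod_const, c]
  have hmoments := fun p : ℕ × {m : ℕ // 1 ≤ m} =>
    integrable_pow_and_integral_of_map_eq_gammaMeasure hk hθ (hYmeas p.1 p.2)
      (hYdist p.1 p.2 p.2.2) (c p.2)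
  obtain ⟨hint, hintegral⟩ := (hYindep.comp (fun p x => x ^ c p.2)
    fun p => measurable_id.pow_const _).integrable_prod_and_integral_prod
    (fun p => (hYmeas p.1 p.2).pow_const _) T fun p _ => (hmoments p).1
  simp only [Function.comp_apply] at hint hintegral
  simp only [hgroup]
  refine ⟨hint, ?_⟩
  rw [hintegral, ← hT fun _ v => gammaMoment k θ (c v)]
  exact prod_congr rfl fun p _ => (hmoments p).2

lemma indepFun_prod_weights_prod_partition (hYmeas : ∀ t n, Measurable (Y t n))
    (hYindep : iIndepFun (fun p : ℕ × {m : ℕ // 1 ≤ m} => Y p.1 p.2) P)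
    (hZ0 : ∀ n ω, Z 0 n ω = if n = 1 then 1 else 0)
    (hZbot : ∀ t ω, Z t 0 ω = 0)
    (hZrec : ∀ t n ω, Z (t + 1) (n + 1) ω = Y t (n + 1) ω * Z t (n + 1) ω + Z t n ω)
    (t : ℕ) {K L : ℕ} {f : Fin K → ℕ} (hf : ∀ i, 1 ≤ f i) (A : Finset (Fin K)) (g : Fin L → ℕ) :
    IndepFun (fun ω => ∏ i ∈ A, Y t (f i) ω) (fun ω => ∏ j, Z t (g j) ω) P := by
  refine hYindep.indepFun_of_measurable_biSup (fun p => hYmeas p.1 p.2)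
    (S := {p : ℕ × {m : ℕ // 1 ≤ m} | p.1 = t}) (T := {p | p.1 < t}) ?_ ?_ ?_
  · exact Set.disjoint_left.mpr fun p (hp : p.1 = t) (hp' : p.1 < t) => hp'.ne hp
  · exact Finset.measurable_prod _ fun i _ =>
      measurable_weightSigma (Y := Y) (p := (t, ⟨f i, hf i⟩)) (S := {p | p.1 = t}) rfl
  · exact Finset.measurable_prod _ fun j _ =>
      measurable_partition_weightSigma_lt hZ0 hZbot hZrec t (g j)

lemma integrable_and_integral_prod_weights_mul [IsProbabilityMeasure P] (hk : 0 < k)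
    (hθ : 0 < θ)
    (hYmeas : ∀ t n, Measurable (Y t n))
    (hYindep : iIndepFun (fun p : ℕ × {m : ℕ // 1 ≤ m} => Y p.1 p.2) P)
    (hYdist : ∀ t n, 1 ≤ n → P.map (Y t n) = gammaMeasure k (1 / θ))
    (hZ0 : ∀ n ω, Z 0 n ω = if n = 1 then 1 else 0)
    (hZbot : ∀ t ω, Z t 0 ω = 0)
    (hZrec : ∀ t n ω, Z (t + 1) (n + 1) ω = Y t (n + 1) ω * Z t (n + 1) ω + Z t n ω)
    (t : ℕ) {K L : ℕ} {f : Fin K → ℕ} (hf : ∀ i, 1 ≤ f i) (A : Finset (Fin K)) {g : Fin L → ℕ}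
    (hg : Integrable (fun ω => ∏ j, Z t (g j) ω) P) :
    Integrable (fun ω => (∏ i ∈ A, Y t (f i) ω) * ∏ j, Z t (g j) ω) P ∧
      ∫ ω, (∏ i ∈ A, Y t (f i) ω) * ∏ j, Z t (g j) ω ∂P =
        (∏ v ∈ univ.image f, gammaMoment k θ #{i ∈ A | f i = v}) * ∫ ω, ∏ j, Z t (g j) ω ∂P := by
  obtain ⟨hYint, hYintegral⟩ :=
    integrable_prod_weights_and_integral hk hθ hYmeas hYindep hYdist t hf A
  have hindep := indepFun_prod_weights_prod_partition hYmeas hYindep hZ0 hZbot hZrec t hf A g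
  refine ⟨hindep.integrable_mul hYint hg, ?_⟩
  rw [hindep.integral_fun_mul_eq_mul_integral hYint.aestronglyMeasurable hg.aestronglyMeasurable,
    hYintegral]

lemma integrable_prod_partition [IsProbabilityMeasure P] (hk : 0 < k) (hθ : 0 < θ)
    (hYmeas : ∀ t n, Measurable (Y t n))
    (hYindep : iIndepFun (fun p : ℕ × {m : ℕ // 1 ≤ m} => Y p.1 p.2) P)
    (hYdist : ∀ t n, 1 ≤ n → P.map (Y t n) = gammaMeasure k (1 / θ))
    (hZ0 : ∀ n ω, Z 0 n ω = if n = 1 then 1 else 0)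
    (hZbot : ∀ t ω, Z t 0 ω = 0)
    (hZrec : ∀ t n ω, Z (t + 1) (n + 1) ω = Y t (n + 1) ω * Z t (n + 1) ω + Z t n ω)
    (t : ℕ) {K : ℕ} (f : Fin K → ℕ) : Integrable (fun ω => ∏ i, Z t (f i) ω) P := by
  induction t generalizing K with
  | zero =>
    simp only [hZ0]
    exact integrable_const _
  | succ t ih =>
    by_cases hzero : ∃ i, f i = 0
    · obtain ⟨i, hi⟩ := hzero
      have hvanish : (fun ω => ∏ i, Z (t + 1) (f i) ω) = 0 :=
        funext fun ω => prod_eq_zero (mem_univ i) (by rw [hi, hZbot])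
      rw [hvanish]
      exact integrable_zero _ _ _
    · have hf : ∀ i, 1 ≤ f i := fun i => Nat.one_le_iff_ne_zero.mpr fun h => hzero ⟨i, h⟩
      simp only [prod_partition_succ_eq_sum hZrec t hf]
      exact integrable_finsetSum _ fun A _ => (integrable_and_integral_prod_weights_mul hk hθ
        hYmeas hYindep hYdist hZ0 hZbot hZrec t hf A (ih _)).1

end StrictWeakPolymer

theorem strictWeak_true_evolution_general
    {Ω : Type*} [MeasurableSpace Ω] (P : Measure Ω) [IsProbabilityMeasure P]
    (k θ : ℝ) (hk : 0 < k) (hθ : 0 < θ)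
    (Y : ℕ → ℕ → Ω → ℝ)
    (hYmeas : ∀ t n, Measurable (Y t n))
    (hYindep : iIndepFun
      (fun p : ℕ × {m : ℕ // 1 ≤ m} => Y p.1 p.2) P)
    (hYdist : ∀ t n, 1 ≤ n → P.map (Y t n) = gammaMeasure k (1 / θ))
    (Z : ℕ → ℕ → Ω → ℝ)
    (hZ0 : ∀ n ω, Z 0 n ω = if n = 1 then 1 else 0)
    (hZbot : ∀ t ω, Z t 0 ω = 0)
    (hZrec : ∀ t n ω, Z (t + 1) (n + 1) ω = Y t (n + 1) ω * Z t (n + 1) ω + Z t n ω)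
    (K : ℕ) (n : Fin K → ℕ)
    (hpos : ∀ i, 1 ≤ n i)
    (t : ℕ) :
    Integrable (fun ω => ∏ i, Z (t + 1) (n i) ω) P ∧
    ∫ ω, ∏ i, Z (t + 1) (n i) ω ∂P =
      ∑ A : Finset (Fin K),
        (∏ v ∈ Finset.univ.image n,
            gammaMoment k θ ((A.filter (fun i => n i = v)).card)) *
          ∫ ω, ∏ i, Z t (vecA n A i) ω ∂P := by
  have hterm := fun A => integrable_and_integral_prod_weights_mul hk hθ hYmeas hYindep hYdist
    hZ0 hZbot hZrec t hpos A
    (integrable_prod_partition hk hθ hYmeas hYindep hYdist hZ0 hZbot hZrec t (vecA n A))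
  simp only [prod_partition_succ_eq_sum hZrec t hpos]
  refine ⟨integrable_finsetSum _ fun A _ => (hterm A).1, ?_⟩
  rw [integral_finsetSum _ fun A _ => (hterm A).1]
  exact sum_congr rfl fun A _ => (hterm A).2

/-- True evolution equation for the joint moments
`u(t, n⃗) = E[∏_i Z(t,n_i)]` of the strict-weak polymer partition function with
i.i.d. Gamma(k,θ) weights. -/
theorem strictWeak_true_evolution
    {Ω : Type*} [MeasurableSpace Ω] (P : Measure Ω) [IsProbabilityMeasure P]
    (k θ : ℝ) (hk : 0 < k) (hθ : 0 < θ)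
    (Y : ℕ → ℕ → Ω → ℝ)
    (hYmeas : ∀ t n, Measurable (Y t n))
    (hYindep : iIndepFun
      (fun p : ℕ × {m : ℕ // 1 ≤ m} => Y p.1 p.2) P)
    (hYdist : ∀ t n, 1 ≤ n → P.map (Y t n) = gammaMeasure k (1 / θ))
    (Z : ℕ → ℕ → Ω → ℝ)
    (hZ0 : ∀ n ω, Z 0 n ω = if n = 1 then 1 else 0)
    (hZbot : ∀ t ω, Z t 0 ω = 0)
    (hZrec : ∀ t n ω, Z (t + 1) (n + 1) ω = Y t (n + 1) ω * Z t (n + 1) ω + Z t n ω)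
    (K : ℕ) (n : Fin K → ℕ)
    (hmono : ∀ i j : Fin K, i ≤ j → n j ≤ n i) (hpos : ∀ i, 1 ≤ n i)
    (t : ℕ) :
    Integrable (fun ω => ∏ i, Z (t + 1) (n i) ω) P ∧
    ∫ ω, ∏ i, Z (t + 1) (n i) ω ∂P =
      ∑ A : Finset (Fin K),
        (∏ v ∈ Finset.univ.image n,
            gammaMoment k θ ((A.filter (fun i => n i = v)).card)) *
          ∫ ω, ∏ i, Z t (vecA n A i) ω ∂P :=
  strictWeak_true_evolution_general P k θ hk hθ Y hYmeas hYindep hYdist Z hZ0 hZbot hZrec K n hpos t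
end

section
/- Fix an integer K ≥ 1 and reals k, θ > 0; set m₁ = θk and m₂ = θ²k(k+1). For 1 ≤ i ≤ K, let τ^{(i)} be the operator on functions of n⃗ ∈ ℤ^K that decreases the i-th coordinate by 1. Suppose u : ℤ_{≥0} × ℤ^K → ℝ satisfies (i) the free evolution equation u(t+1, n⃗) = Π_{i=1}^{K}(m₁ + τ^{(i)}) u(t, n⃗) (the product expanded multilinearly) for all n⃗ ∈ ℤ^K, and (ii) the two-body boundary conditions (m₁² - m₂ + m₁(τ^{(i)} - τ^{(i+1)})) u(t, n⃗) = 0 whenever n_i = n_{i+1}. Then for every weakly decreasing n⃗ whose coordinates are constant on L consecutive blocks of sizes c₁,…,c_L and strictly decreasing between blocks, u satisfies the true evolution equation u(t+1, n⃗) = Σ_{A ⊆ {1,…,K}} ( Π_{i=1}^{L} m_{c_i^A} ) · u(t, n⃗^A), where c_i^A is the number of elements of A in the i-th block, n⃗^A is obtained from n⃗ by decreasing by 1 each coordinate in the last c_i - c_i^A positions of block i, and m_j = θ^j Π_{l=0}^{j-1}(k+l) with m₀ = 1. -/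
/-- `n⃗^A`: within each block of equal coordinates of the weakly decreasing vector `n⃗`,
the first `c_i^A = #(A ∩ block)` coordinates are kept and the remaining (last) ones
are decreased by `1`. -/
def vecAZ {K : ℕ} (n : Fin K → ℤ) (A : Finset (Fin K)) (i : Fin K) : ℤ :=
  if (Finset.univ.filter (fun j : Fin K => n j = n i ∧ j < i)).card <
      (A.filter (fun j => n j = n i)).card
  then n i else n i - 1

open Finset

namespace FPBaux

lemma gammaMoment_succ (k θ : ℝ) (a : ℕ) :
    gammaMoment k θ (a + 1) = θ * (k + a) * gammaMoment k θ a := by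
  simp only [gammaMoment, Finset.prod_range_succ, pow_succ]
  ring

def rnk {K : ℕ} (n : Fin K → ℤ) (i : Fin K) : ℕ :=
  (Finset.univ.filter (fun j : Fin K => n j = n i ∧ j < i)).card

def cnt {K : ℕ} (n : Fin K → ℤ) (A : Finset (Fin K)) (i : Fin K) : ℕ :=
  (A.filter fun j => n j = n i).card

def Dset {K : ℕ} (n : Fin K → ℤ) (A : Finset (Fin K)) : Finset (Fin K) :=
  Finset.univ.filter fun i => ¬ rnk n i < cnt n A i

def Rel1 (θ : ℝ) {K : ℕ} (n : Fin K → ℤ) (g : Finset (Fin K) → ℝ) : Prop :=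
  ∀ (i : Fin K) (h : (i : ℕ) + 1 < K) (T : Finset (Fin K)),
    n i = n ⟨(i : ℕ) + 1, h⟩ → i ∉ T → (⟨(i : ℕ) + 1, h⟩ : Fin K) ∉ T →
    g (insert i T) = g (insert ⟨(i : ℕ) + 1, h⟩ T) + θ * g T

lemma push (θ : ℝ) {K : ℕ} (n : Fin K → ℤ) (g : Finset (Fin K) → ℝ) (hrel : Rel1 θ n g) :
    ∀ (a : ℕ) (ha : a < K) (S : Finset (Fin K)),
      (∀ r (hr : r ≤ a), n ⟨r, lt_of_le_of_lt hr ha⟩ = n ⟨a, ha⟩) →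
      (∀ r (hr : r ≤ a), (⟨r, lt_of_le_of_lt hr ha⟩ : Fin K) ∉ S) →
      g (insert ⟨0, Nat.lt_of_le_of_lt (Nat.zero_le a) ha⟩ S)
        = g (insert ⟨a, ha⟩ S) + (a : ℝ) * θ * g S := by
  intro a
  induction a with
  | zero => intro ha S _ _; simp
  | succ a IH =>
    intro ha S hval hS
    have ha' : a < K := Nat.lt_of_succ_lt ha
    have h1 := IH ha' S
      (fun r hr => (hval r (le_trans hr (Nat.le_succ a))).trans (hval a (Nat.le_succ a)).symm)
      (fun r hr => hS r (le_trans hr (Nat.le_succ a)))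
    have h2 := hrel ⟨a, ha'⟩ ha S (hval a (Nat.le_succ a)) (hS a (Nat.le_succ a)) (hS (a+1) le_rfl)
    rw [h1, h2]
    push_cast
    ring

lemma rnk_zero {K : ℕ} (n : Fin (K + 1) → ℤ) : rnk n 0 = 0 := by
  simp [rnk]

lemma rnk_succ {K : ℕ} (n : Fin (K + 1) → ℤ) (j : Fin K) :
    rnk n j.succ = rnk (fun l => n l.succ) j + (if n 0 = n j.succ then 1 else 0) := by
  rw [rnk, rnk, Finset.card_filter, Finset.card_filter, Fin.sum_univ_succ]
  have h0 : ((0 : Fin (K+1)) < j.succ) := j.succ_pos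
  simp only [h0, and_true, Fin.succ_lt_succ_iff]
  rw [add_comm]

lemma cnt_map_succ {K : ℕ} (n : Fin (K + 1) → ℤ) (A' : Finset (Fin K)) (j : Fin K) :
    cnt n (A'.map (Fin.succEmb K)) j.succ = cnt (fun l => n l.succ) A' j := by
  rw [cnt, cnt, Finset.filter_map, Finset.card_map]
  rfl

lemma cnt_map_zero {K : ℕ} (n : Fin (K + 1) → ℤ) (A' : Finset (Fin K)) :
    cnt n (A'.map (Fin.succEmb K)) 0 = (A'.filter fun j => n j.succ = n 0).card := by
  rw [cnt, Finset.filter_map, Finset.card_map]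
  rfl

lemma zero_notMem_map {K : ℕ} (A' : Finset (Fin K)) :
    (0 : Fin (K+1)) ∉ A'.map (Fin.succEmb K) := by
  intro hmem
  obtain ⟨j, _, hj⟩ := Finset.mem_map.1 hmem
  exact Fin.succ_ne_zero j hj

lemma cnt_insert_zero {K : ℕ} (n : Fin (K + 1) → ℤ) (A' : Finset (Fin K)) (i : Fin (K+1)) :
    cnt n (insert 0 (A'.map (Fin.succEmb K))) i
      = cnt n (A'.map (Fin.succEmb K)) i + (if n 0 = n i then 1 else 0) := by
  rw [cnt, cnt, Finset.filter_insert]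
  by_cases hc : n 0 = n i
  · rw [if_pos hc, if_pos hc, Finset.card_insert_of_notMem]
    intro hmem
    exact zero_notMem_map A' (Finset.mem_of_mem_filter _ hmem)
  · rw [if_neg hc, if_neg hc, add_zero]

lemma card_filter_lt {K : ℕ} (j : Fin K) : (univ.filter (fun l => l < j)).card = j := by
  have : univ.filter (fun l => l < j) = Finset.Iio j := by ext l; simp
  rw [this, Fin.card_Iio]

lemma rnk_of_block {K : ℕ} (m : Fin K → ℤ) (j : Fin K) (hj : ∀ l, l ≤ j → m l = m j) :
    rnk m j = j := by
  rw [rnk, ← card_filter_lt j]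
  congr 1
  apply Finset.filter_congr
  intro l _
  simp only [iff_self_and, and_iff_right_iff_imp]
  exact fun hl => hj l (le_of_lt hl)

section Step
variable {K : ℕ} (n : Fin (K + 1) → ℤ)

lemma Dset_insert_map (A' : Finset (Fin K)) :
    Dset n (insert 0 (A'.map (Fin.succEmb K)))
      = (Dset (fun l => n l.succ) A').map (Fin.succEmb K) := by
  ext i
  induction i using Fin.cases with
  | zero =>
    simp only [Dset, Finset.mem_filter, Finset.mem_univ, true_and]
    constructor
    · intro h
      exfalso
      apply h
      rw [rnk_zero, cnt_insert_zero, if_pos rfl]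
      omega
    · intro h
      exact absurd h (zero_notMem_map _)
  | succ j =>
    have key : j.succ ∈ Dset n (insert 0 (A'.map (Fin.succEmb K)))
        ↔ j ∈ Dset (fun l => n l.succ) A' := by
      simp only [Dset, Finset.mem_filter, Finset.mem_univ, true_and]
      rw [cnt_insert_zero, cnt_map_succ, rnk_succ]
      set ε := if n 0 = n j.succ then 1 else 0
      constructor <;> (intro h; omega)
    rw [key]
    exact (Finset.mem_map' _).symm

lemma block_val (hmono : ∀ i j : Fin (K+1), i ≤ j → n j ≤ n i) (A' : Finset (Fin K))
    (s : ℕ) (hs : s < K)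
    (hsa : s < (A'.filter fun j => n j.succ = n 0).card) :
    n (Fin.succ ⟨s, hs⟩) = n 0 := by
  by_contra hne
  have hsub : (univ.filter fun j : Fin K => n j.succ = n 0) ⊆ Finset.Iio ⟨s, hs⟩ := by
    intro j hj
    rw [Finset.mem_filter] at hj
    rw [Finset.mem_Iio]
    by_contra hlt
    push_neg at hlt
    apply hne
    apply le_antisymm
    · exact hmono 0 _ (Fin.zero_le _)
    · calc n 0 = n j.succ := hj.2.symm
        _ ≤ n (Fin.succ ⟨s, hs⟩) := hmono _ _ (Fin.succ_le_succ_iff.2 hlt)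
  have h1 : (A'.filter fun j => n j.succ = n 0).card
      ≤ (univ.filter fun j : Fin K => n j.succ = n 0).card :=
    Finset.card_le_card (Finset.filter_subset_filter _ (Finset.subset_univ A'))
  have h2 := Finset.card_le_card hsub
  rw [Fin.card_Iio] at h2
  have h3 : ((⟨s, hs⟩ : Fin K) : ℕ) = s := rfl
  omega

lemma a_le_K (A' : Finset (Fin K)) : (A'.filter fun j => n j.succ = n 0).card ≤ K :=
  le_trans (Finset.card_le_card (Finset.filter_subset_filter _ (Finset.subset_univ A')))
    (by simpa using Finset.card_le_univ (univ.filter fun j : Fin K => n j.succ = n 0))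

lemma mem_map_succ {K : ℕ} (A' : Finset (Fin K)) (j : Fin K) :
    j.succ ∈ A'.map (Fin.succEmb K) ↔ j ∈ A' := by
  rw [Finset.mem_map]
  constructor
  · rintro ⟨l, hl, hlj⟩
    have : l = j := Fin.succ_injective K hlj
    rwa [← this]
  · intro h; exact ⟨j, h, rfl⟩

lemma Dset_map (hmono : ∀ i j : Fin (K+1), i ≤ j → n j ≤ n i) (A' : Finset (Fin K))
    (a : ℕ) (hadef : a = (A'.filter fun j => n j.succ = n 0).card) (ha : a < K + 1) :
    Dset n (A'.map (Fin.succEmb K))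
      = insert ⟨a, ha⟩ ((Dset (fun l => n l.succ) A').map (Fin.succEmb K)) := by
  ext i
  rw [Finset.mem_insert]
  induction i using Fin.cases with
  | zero =>
    have hnm := zero_notMem_map (Dset (fun l => n l.succ) A')
    constructor
    · intro h
      left
      have hna : ¬ 0 < a := by
        simp only [Dset, Finset.mem_filter, Finset.mem_univ, true_and] at h
        rw [rnk_zero, cnt_map_zero, ← hadef] at h
        exact h
      rw [Fin.ext_iff]
      simp only [Fin.val_zero]
      omega
    · intro h
      simp only [Dset, Finset.mem_filter, Finset.mem_univ, true_and]
      rw [rnk_zero, cnt_map_zero, ← hadef]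
      rcases h with h | h
      · have : a = 0 := by
          rw [Fin.ext_iff] at h
          simpa using h.symm
        omega
      · exact absurd h hnm
  | succ j =>
    rw [mem_map_succ]
    simp only [Dset, Finset.mem_filter, Finset.mem_univ, true_and]
    rw [cnt_map_succ, rnk_succ]
    have hval : (j.succ = (⟨a, ha⟩ : Fin (K+1))) ↔ (j : ℕ) + 1 = a := by
      rw [Fin.ext_iff, Fin.val_succ]
    rw [hval]
    by_cases hc : n 0 = n j.succ
    · have hcnt : cnt (fun l => n l.succ) A' j = a := by
        rw [cnt, hadef]
        congr 1
        apply Finset.filter_congr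
        intro l _
        constructor
        · intro h; rw [h, ← hc]
        · intro h; rw [h, hc]
      have hrnk : rnk (fun l => n l.succ) j = (j : ℕ) := by
        apply rnk_of_block
        intro l hl
        apply le_antisymm
        · calc n l.succ ≤ n 0 := hmono 0 _ (Fin.zero_le _)
            _ = n j.succ := hc
        · exact hmono _ _ (Fin.succ_le_succ_iff.2 hl)
      rw [hcnt, hrnk, if_pos hc]
      omega
    · rw [if_neg hc]
      have hja : (j : ℕ) + 1 ≠ a := by
        intro heq
        apply hc
        have hlt : (j : ℕ) < (A'.filter fun l => n l.succ = n 0).card := by omega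
        have := block_val n hmono A' j j.isLt hlt
        exact this.symm
      constructor
      · intro h; right; omega
      · intro h
        rcases h with h | h
        · exact absurd h hja
        · omega

lemma image_succ : univ.image n = insert (n 0) (univ.image (fun j : Fin K => n j.succ)) := by
  rw [Fin.univ_succ, Finset.cons_eq_insert, Finset.image_insert]
  congr 1
  rw [Finset.map_eq_image, Finset.image_image]
  rfl

lemma cntv_map (A' : Finset (Fin K)) (v : ℤ) :
    ((A'.map (Fin.succEmb K)).filter fun l => n l = v).card
      = (A'.filter fun j => n j.succ = v).card := by
  rw [Finset.filter_map, Finset.card_map]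
  rfl

lemma cntv_insert (A' : Finset (Fin K)) (v : ℤ) :
    ((insert 0 (A'.map (Fin.succEmb K))).filter fun l => n l = v).card
      = (A'.filter fun j => n j.succ = v).card + (if n 0 = v then 1 else 0) := by
  rw [Finset.filter_insert]
  by_cases hc : n 0 = v
  · rw [if_pos hc, if_pos hc, Finset.card_insert_of_notMem, cntv_map]
    intro hmem
    exact zero_notMem_map A' (Finset.mem_of_mem_filter _ hmem)
  · rw [if_neg hc, if_neg hc, add_zero, cntv_map]

lemma filter_block_empty (h0 : n 0 ∉ univ.image (fun j : Fin K => n j.succ))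
    (A' : Finset (Fin K)) : (A'.filter fun j => n j.succ = n 0) = ∅ := by
  rw [Finset.filter_eq_empty_iff]
  intro j _ hj
  exact h0 (Finset.mem_image.2 ⟨j, Finset.mem_univ j, hj⟩)

end Step

noncomputable def W (k θ : ℝ) {K : ℕ} (n : Fin K → ℤ) (A : Finset (Fin K)) : ℝ :=
  ∏ v ∈ Finset.univ.image n, gammaMoment k θ ((A.filter fun j => n j = v).card)

section WStep
variable (k θ : ℝ) {K : ℕ} (n : Fin (K + 1) → ℤ)

lemma W_map (A' : Finset (Fin K)) :
    W k θ n (A'.map (Fin.succEmb K)) = W k θ (fun j => n j.succ) A' := by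
  rw [W, W, image_succ]
  by_cases h0 : n 0 ∈ univ.image (fun j : Fin K => n j.succ)
  · rw [Finset.insert_eq_self.2 h0]
    exact Finset.prod_congr rfl (fun v _ => by rw [cntv_map])
  · rw [Finset.prod_insert h0, cntv_map, filter_block_empty n h0 A']
    simp only [Finset.card_empty]
    rw [show gammaMoment k θ 0 = 1 by simp [gammaMoment], one_mul]
    exact Finset.prod_congr rfl (fun v _ => by rw [cntv_map])

lemma W_insert (A' : Finset (Fin K)) :
    W k θ n (insert 0 (A'.map (Fin.succEmb K)))
      = θ * (k + ((A'.filter fun j => n j.succ = n 0).card : ℝ))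
          * W k θ (fun j => n j.succ) A' := by
  set a := (A'.filter fun j => n j.succ = n 0).card with hadef
  by_cases h0 : n 0 ∈ univ.image (fun j : Fin K => n j.succ)
  · have step1 : W k θ n (insert 0 (A'.map (Fin.succEmb K)))
        = ∏ v ∈ univ.image (fun j : Fin K => n j.succ),
            gammaMoment k θ ((A'.filter fun j => n j.succ = v).card
              + (if n 0 = v then 1 else 0)) := by
      rw [W, image_succ, Finset.insert_eq_self.2 h0]
      exact Finset.prod_congr rfl (fun v _ => by rw [cntv_insert])
    rw [step1, ← Finset.mul_prod_erase _ _ h0, if_pos rfl]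
    rw [W, ← Finset.mul_prod_erase _ _ h0]
    rw [← hadef, gammaMoment_succ]
    have step2 : ∏ v ∈ (univ.image (fun j : Fin K => n j.succ)).erase (n 0),
        gammaMoment k θ ((A'.filter fun j => n j.succ = v).card
          + (if n 0 = v then 1 else 0))
        = ∏ v ∈ (univ.image (fun j : Fin K => n j.succ)).erase (n 0),
            gammaMoment k θ ((A'.filter fun j => n j.succ = v).card) := by
      refine Finset.prod_congr rfl (fun v hv => ?_)
      rw [if_neg (Ne.symm (Finset.ne_of_mem_erase hv)), add_zero]
    rw [step2]
    ring
  · have ha0 : a = 0 := by rw [hadef, filter_block_empty n h0 A', Finset.card_empty]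
    have step1 : W k θ n (insert 0 (A'.map (Fin.succEmb K)))
        = gammaMoment k θ (a + 1)
            * ∏ v ∈ univ.image (fun j : Fin K => n j.succ),
                gammaMoment k θ ((A'.filter fun j => n j.succ = v).card) := by
      rw [W, image_succ, Finset.prod_insert h0, cntv_insert, if_pos rfl, ← hadef]
      congr 1
      refine Finset.prod_congr rfl (fun v hv => ?_)
      rw [cntv_insert, if_neg (by rintro rfl; exact h0 hv), add_zero]
    rw [step1, gammaMoment_succ, ha0, show gammaMoment k θ 0 = 1 by simp [gammaMoment], W]
    push_cast
    ring

end WStep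

lemma powerset_map {α β : Type*} (s : Finset α) (f : α ↪ β) :
    (s.map f).powerset = s.powerset.map (Finset.mapEmbedding f).toEmbedding := by
  ext t
  simp only [Finset.mem_powerset, Finset.mem_map, Finset.subset_map_iff,
    RelEmbedding.coe_toEmbedding, Finset.mapEmbedding_apply]
  constructor
  · rintro ⟨u, hu, rfl⟩; exact ⟨u, hu, rfl⟩
  · rintro ⟨u, hu, rfl⟩; exact ⟨u, hu, rfl⟩

lemma sum_split {M : Type*} [AddCommMonoid M] (K : ℕ) (F : Finset (Fin (K + 1)) → M) :
    ∑ T : Finset (Fin (K + 1)), F T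
      = ∑ T : Finset (Fin K),
          (F (T.map (Fin.succEmb K)) + F (insert 0 (T.map (Fin.succEmb K)))) := by
  rw [← Finset.powerset_univ, Fin.univ_succ, Finset.cons_eq_insert,
    Finset.sum_powerset_insert (by simp), Finset.sum_add_distrib]
  congr 1
  · rw [powerset_map, Finset.sum_map, Finset.powerset_univ]
    rfl
  · rw [powerset_map, Finset.sum_map, Finset.powerset_univ]
    rfl

section RelTransfer
variable (θ : ℝ) {K : ℕ} (n : Fin (K + 1) → ℤ) (g : Finset (Fin (K + 1)) → ℝ)

lemma succ_mk_eq (i : Fin K) (h : (i : ℕ) + 1 < K) :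
    (Fin.succEmb K) (⟨(i : ℕ) + 1, h⟩ : Fin K)
      = (⟨((i.succ : Fin (K+1)) : ℕ) + 1, by simpa using Nat.succ_lt_succ h⟩ : Fin (K+1)) := by
  apply Fin.ext
  simp

lemma rel_map (hrel : Rel1 θ n g) :
    Rel1 θ (fun l => n l.succ) (fun T => g (T.map (Fin.succEmb K))) := by
  intro i h T hval hi hi1
  have h' : ((i.succ : Fin (K+1)) : ℕ) + 1 < K + 1 := by simpa using Nat.succ_lt_succ h
  have hval' : n i.succ = n ⟨((i.succ : Fin (K+1)) : ℕ) + 1, h'⟩ := by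
    have : (⟨((i.succ : Fin (K+1)) : ℕ) + 1, h'⟩ : Fin (K+1)) = (⟨(i : ℕ) + 1, h⟩ : Fin K).succ := by
      apply Fin.ext; simp
    rw [this]
    exact hval
  have hm1 : i.succ ∉ T.map (Fin.succEmb K) := fun hm => hi ((mem_map_succ T i).1 hm)
  have hm2 : (⟨((i.succ : Fin (K+1)) : ℕ) + 1, h'⟩ : Fin (K+1)) ∉ T.map (Fin.succEmb K) := by
    rw [← succ_mk_eq i h]
    intro hm
    exact hi1 ((Finset.mem_map' _).1 hm)
  have := hrel i.succ h' (T.map (Fin.succEmb K)) hval' hm1 hm2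
  simp only []
  rw [Finset.map_insert, Finset.map_insert, succ_mk_eq i h]
  exact this

lemma rel_insert (hrel : Rel1 θ n g) :
    Rel1 θ (fun l => n l.succ) (fun T => g (insert 0 (T.map (Fin.succEmb K)))) := by
  intro i h T hval hi hi1
  have h' : ((i.succ : Fin (K+1)) : ℕ) + 1 < K + 1 := by simpa using Nat.succ_lt_succ h
  have hval' : n i.succ = n ⟨((i.succ : Fin (K+1)) : ℕ) + 1, h'⟩ := by
    have : (⟨((i.succ : Fin (K+1)) : ℕ) + 1, h'⟩ : Fin (K+1)) = (⟨(i : ℕ) + 1, h⟩ : Fin K).succ := by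
      apply Fin.ext; simp
    rw [this]
    exact hval
  have hm1 : i.succ ∉ insert 0 (T.map (Fin.succEmb K)) := by
    rw [Finset.mem_insert]
    rintro (hm | hm)
    · exact Fin.succ_ne_zero i hm
    · exact hi ((mem_map_succ T i).1 hm)
  have hm2 : (⟨((i.succ : Fin (K+1)) : ℕ) + 1, h'⟩ : Fin (K+1)) ∉ insert 0 (T.map (Fin.succEmb K)) := by
    rw [← succ_mk_eq i h, Finset.mem_insert]
    rintro (hm | hm)
    · exact Fin.succ_ne_zero (⟨(i : ℕ) + 1, h⟩ : Fin K) hm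
    · exact hi1 ((Finset.mem_map' _).1 hm)
  have := hrel i.succ h' (insert 0 (T.map (Fin.succEmb K))) hval' hm1 hm2
  simp only []
  rw [Finset.map_insert, Finset.map_insert, succ_mk_eq i h,
    Finset.insert_comm, Finset.insert_comm 0]
  exact this

lemma block_notMem_Dset (hmono : ∀ i j : Fin (K+1), i ≤ j → n j ≤ n i)
    (A' : Finset (Fin K)) (s : ℕ) (hsK : s < K)
    (hsa : s < (A'.filter fun j => n j.succ = n 0).card) :
    (⟨s, hsK⟩ : Fin K) ∉ Dset (fun l => n l.succ) A' := by
  have hval : n (⟨s, hsK⟩ : Fin K).succ = n 0 := block_val n hmono A' s hsK hsa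
  have hcnt : cnt (fun l => n l.succ) A' ⟨s, hsK⟩
      = (A'.filter fun j => n j.succ = n 0).card := by
    rw [cnt]
    congr 1
    apply Finset.filter_congr
    intro l _
    constructor
    · intro hl; rw [hl, hval]
    · intro hl; rw [hl, ← hval]
  have hrnk : rnk (fun l => n l.succ) ⟨s, hsK⟩ = s := by
    apply rnk_of_block
    intro l hl
    apply le_antisymm
    · calc n l.succ ≤ n 0 := hmono 0 _ (Fin.zero_le _)
        _ = n (⟨s, hsK⟩ : Fin K).succ := hval.symm
    · exact hmono _ _ (Fin.succ_le_succ_iff.2 hl)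
  intro hm
  rw [Dset, Finset.mem_filter] at hm
  apply hm.2
  rw [hrnk, hcnt]
  exact hsa

end RelTransfer

lemma lemmaM (k θ : ℝ) : ∀ (K : ℕ) (n : Fin K → ℤ),
    (∀ i j : Fin K, i ≤ j → n j ≤ n i) →
    ∀ g : Finset (Fin K) → ℝ, Rel1 θ n g →
    ∑ T : Finset (Fin K), (θ * k) ^ (K - T.card) * g T
      = ∑ A : Finset (Fin K), W k θ n A * g (Dset n A) := by
  intro K
  induction K with
  | zero =>
    intro n _ g _
    have he : ∀ T : Finset (Fin 0), T = ∅ :=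
      fun T => Finset.eq_empty_of_forall_notMem (fun x => x.elim0)
    refine Finset.sum_congr rfl (fun T _ => ?_)
    rw [he T, he (Dset n ∅)]
    simp [W]
  | succ K IH =>
    intro n hmono g hrel
    have hmono' : ∀ i j : Fin K, i ≤ j → n j.succ ≤ n i.succ :=
      fun i j hij => hmono _ _ (Fin.succ_le_succ_iff.2 hij)
    have L0 := IH (fun l => n l.succ) hmono'
      (fun T => g (T.map (Fin.succEmb K))) (rel_map θ n g hrel)
    have L1 := IH (fun l => n l.succ) hmono'
      (fun T => g (insert 0 (T.map (Fin.succEmb K)))) (rel_insert θ n g hrel)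
    rw [sum_split K (fun T => (θ * k) ^ (K + 1 - T.card) * g T),
        sum_split K (fun A => W k θ n A * g (Dset n A))]
    have cardle : ∀ T : Finset (Fin K), T.card ≤ K :=
      fun T => by simpa using Finset.card_le_univ T
    have lhs_eq : ∀ T : Finset (Fin K),
        (θ * k) ^ (K + 1 - (T.map (Fin.succEmb K)).card) * g (T.map (Fin.succEmb K))
          + (θ * k) ^ (K + 1 - (insert 0 (T.map (Fin.succEmb K))).card)
              * g (insert 0 (T.map (Fin.succEmb K)))
        = (θ * k) * ((θ * k) ^ (K - T.card) * g (T.map (Fin.succEmb K)))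
          + (θ * k) ^ (K - T.card) * g (insert 0 (T.map (Fin.succEmb K))) := by
      intro T
      rw [Finset.card_map, Finset.card_insert_of_notMem (zero_notMem_map T),
        Finset.card_map]
      have h1 : K + 1 - T.card = (K - T.card) + 1 := by
        have := cardle T; omega
      have h2 : K + 1 - (T.card + 1) = K - T.card := by omega
      rw [h1, h2, pow_succ]
      ring
    rw [Finset.sum_congr rfl (fun T _ => lhs_eq T), Finset.sum_add_distrib,
      ← Finset.mul_sum, L0, L1, Finset.mul_sum, ← Finset.sum_add_distrib]
    refine Finset.sum_congr rfl (fun A' _ => ?_)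
    -- per-A' identity
    set a := (A'.filter fun j => n j.succ = n 0).card with hadef
    have ha : a < K + 1 := Nat.lt_succ_of_le (a_le_K n A')
    have hb : Dset n (insert 0 (A'.map (Fin.succEmb K)))
        = (Dset (fun l => n l.succ) A').map (Fin.succEmb K) := Dset_insert_map n A'
    have hDm : Dset n (A'.map (Fin.succEmb K))
        = insert ⟨a, ha⟩ ((Dset (fun l => n l.succ) A').map (Fin.succEmb K)) :=
      Dset_map n hmono A' a hadef ha
    have hblock : ∀ (r : ℕ) (hr : r < K + 1), r ≤ a → n ⟨r, hr⟩ = n 0 := by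
      intro r hr hra
      match r with
      | 0 => rw [Fin.mk_zero]
      | (s + 1) =>
        have hsK : s < K := by omega
        have := block_val n hmono A' s hsK (by omega)
        have hmk : (⟨s, hsK⟩ : Fin K).succ = (⟨s + 1, hr⟩ : Fin (K+1)) := by
          apply Fin.ext; simp
        rwa [hmk] at this
    have hmem : ∀ (r : ℕ) (hr : r ≤ a),
        (⟨r, lt_of_le_of_lt hr ha⟩ : Fin (K + 1))
          ∉ (Dset (fun l => n l.succ) A').map (Fin.succEmb K) := by
      intro r hr
      match r with
      | 0 =>
        rw [Fin.mk_zero]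
        exact zero_notMem_map _
      | (s + 1) =>
        have hsK : s < K := by omega
        have hmk : (⟨s + 1, lt_of_le_of_lt hr ha⟩ : Fin (K+1)) = (⟨s, hsK⟩ : Fin K).succ := by
          apply Fin.ext; simp
        rw [hmk, mem_map_succ]
        exact block_notMem_Dset n hmono A' s hsK (by omega)
    have hpush : g (insert 0 ((Dset (fun l => n l.succ) A').map (Fin.succEmb K)))
        = g (insert ⟨a, ha⟩ ((Dset (fun l => n l.succ) A').map (Fin.succEmb K)))
          + (a : ℝ) * θ * g ((Dset (fun l => n l.succ) A').map (Fin.succEmb K)) := by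
      have := push θ n g hrel a ha ((Dset (fun l => n l.succ) A').map (Fin.succEmb K))
        (fun r hr => (hblock r _ hr).trans (hblock a _ le_rfl).symm)
        hmem
      rwa [Fin.mk_zero] at this
    rw [hb, hDm, W_map k θ n A', W_insert k θ n A', hpush, ← hadef]
    ring

end FPBaux

/-- If `u` satisfies the free evolution equation and the two-body boundary
conditions, then it satisfies the true evolution equation on weakly decreasing
vectors. -/
theorem free_plus_boundary_implies_true_evolution
    (K : ℕ) (hK : 1 ≤ K) (k θ : ℝ) (hk : 0 < k) (hθ : 0 < θ)
    (u : ℕ → (Fin K → ℤ) → ℝ)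
    (hfree : ∀ t : ℕ, ∀ n : Fin K → ℤ,
      u (t + 1) n = ∑ A : Finset (Fin K),
        (θ * k) ^ A.card * u t (fun i => if i ∈ A then n i else n i - 1))
    (hbdry : ∀ t : ℕ, ∀ n : Fin K → ℤ, ∀ i : Fin K, ∀ h : (i : ℕ) + 1 < K,
      n i = n ⟨(i : ℕ) + 1, h⟩ →
        ((θ * k) ^ 2 - θ ^ 2 * k * (k + 1)) * u t n +
          (θ * k) * (u t (Function.update n i (n i - 1)) -
            u t (Function.update n ⟨(i : ℕ) + 1, h⟩ (n ⟨(i : ℕ) + 1, h⟩ - 1))) = 0)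
    (t : ℕ) (n : Fin K → ℤ) (hmono : ∀ i j : Fin K, i ≤ j → n j ≤ n i) :
    u (t + 1) n = ∑ A : Finset (Fin K),
      (∏ v ∈ Finset.univ.image n,
          gammaMoment k θ ((A.filter (fun i => n i = v)).card)) *
        u t (vecAZ n A) := by

  have hk0 : θ * k ≠ 0 := ne_of_gt (mul_pos hθ hk)
  -- the function g
  set g : Finset (Fin K) → ℝ := fun T => u t (fun l => if l ∈ T then n l - 1 else n l) with hg
  have hrelg : FPBaux.Rel1 θ n g := by
    intro i h T hval hi hi1
    set v : Fin K → ℤ := fun l => if l ∈ T then n l - 1 else n l with hv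
    have hvi : v i = n i := by rw [hv]; simp [hi]
    have hvi1 : v ⟨(i : ℕ) + 1, h⟩ = n ⟨(i : ℕ) + 1, h⟩ := by rw [hv]; simp [hi1]
    have hveq : v i = v ⟨(i : ℕ) + 1, h⟩ := by rw [hvi, hvi1]; exact hval
    have hb := hbdry t v i h hveq
    have e1 : Function.update v i (v i - 1)
        = fun l => if l ∈ insert i T then n l - 1 else n l := by
      funext l
      by_cases hl : l = i
      · subst hl
        rw [Function.update_self, hvi, if_pos (Finset.mem_insert_self _ T)]
      · rw [Function.update_of_ne hl, hv]
        simp only [Finset.mem_insert, hl, false_or]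
    have e2 : Function.update v ⟨(i : ℕ) + 1, h⟩ (v ⟨(i : ℕ) + 1, h⟩ - 1)
        = fun l => if l ∈ insert (⟨(i : ℕ) + 1, h⟩ : Fin K) T then n l - 1 else n l := by
      funext l
      by_cases hl : l = (⟨(i : ℕ) + 1, h⟩ : Fin K)
      · subst hl
        rw [Function.update_self, hvi1, if_pos (Finset.mem_insert_self _ T)]
      · rw [Function.update_of_ne hl, hv]
        simp only [Finset.mem_insert, hl, false_or]
    rw [e1, e2] at hb
    show g (insert i T) = g (insert (⟨(i : ℕ) + 1, h⟩ : Fin K) T) + θ * g T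
    rw [hg]
    have hb' : (θ * k) * u t (fun l => if l ∈ insert i T then n l - 1 else n l)
        = (θ * k) * (u t (fun l => if l ∈ insert (⟨(i : ℕ) + 1, h⟩ : Fin K) T then n l - 1 else n l)
            + θ * u t v) := by linear_combination hb
    exact mul_left_cancel₀ hk0 hb'
  rw [hfree t n]
  have hreindex : ∑ A : Finset (Fin K),
      (θ * k) ^ A.card * u t (fun i => if i ∈ A then n i else n i - 1)
      = ∑ T : Finset (Fin K), (θ * k) ^ (K - T.card) * g T := by
    apply Fintype.sum_bijective (fun A : Finset (Fin K) => Aᶜ)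
      (Function.Involutive.bijective (fun A => compl_compl A))
    intro A
    have hcard : K - Aᶜ.card = A.card := by
      rw [Finset.card_compl, Fintype.card_fin]
      have : A.card ≤ K := by simpa using Finset.card_le_univ A
      omega
    have harg : (fun l => if l ∈ Aᶜ then n l - 1 else n l)
        = (fun i => if i ∈ A then n i else n i - 1) := by
      funext l
      by_cases hl : l ∈ A
      · simp [hl]
      · simp [hl]
    show (θ * k) ^ A.card * u t (fun i => if i ∈ A then n i else n i - 1)
        = (θ * k) ^ (K - Aᶜ.card) * u t (fun l => if l ∈ Aᶜ then n l - 1 else n l)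
    rw [hcard, harg]
  rw [hreindex, FPBaux.lemmaM k θ K n hmono g hrelg]
  refine Finset.sum_congr rfl (fun A _ => ?_)
  have harg : (fun l => if l ∈ FPBaux.Dset n A then n l - 1 else n l) = vecAZ n A := by
    funext l
    have hva : vecAZ n A l = if FPBaux.rnk n l < FPBaux.cnt n A l then n l else n l - 1 := rfl
    by_cases hc : FPBaux.rnk n l < FPBaux.cnt n A l
    · rw [hva, if_pos hc, if_neg (by simp [FPBaux.Dset]; omega)]
    · rw [hva, if_neg hc, if_pos (by simp [FPBaux.Dset]; omega)]
  show FPBaux.W k θ n A * u t (fun l => if l ∈ FPBaux.Dset n A then n l - 1 else n l)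
      = (∏ v ∈ Finset.univ.image n,
          gammaMoment k θ ((A.filter (fun i => n i = v)).card)) * u t (vecAZ n A)
  rw [harg]
  rfl
end

section
/- Let θ > 0, let K ≥ 1 be an integer, and let r₁ > r₂ > … > r_K > 0 be radii satisfying r_j > r_{j+1} + θ for 1 ≤ j ≤ K-1. Then (2πi)^{-K} ∮_{|z₁|=r₁} ⋯ ∮_{|z_K|=r_K} Π_{1≤A<B≤K} (z_A - z_B)/(z_A - z_B - θ) · Π_{j=1}^{K} z_j^{-1} dz_j = 1, where each contour is a positively oriented circle centered at the origin. -/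
/-!
Integrate the inner variables first and keep the outer ones, already fixed, as spectators `w`:
when every `wₐ` lies outside the circles shifted by `θ` (and `|wₐ| > Kθ`), the `K`-fold integral
equals `(2πi)^K ∏ₐ wₐ / (wₐ - Kθ)`. By induction, the inner integral with spectators `(z₁, w)` turns
the `z₁`-integrand into `(2πi)^K ∏ₐ wₐ / (wₐ - Kθ) · P(z₁) / (z₁ - Kθ)`, where
`P(z) = ∏ₐ (wₐ - z) / (wₐ - z - θ)` is holomorphic on `|z| ≤ r₁`. So the only pole left is
`z₁ = Kθ`; Cauchy's formula contributes `P(Kθ)`, whose factors telescope with `wₐ / (wₐ - Kθ)`.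
The theorem is the case without spectators.
-/

/-- Iterated contour integral over nested circles centered at the origin:
`multiCircle K r f = ∮_{|z₁|=r 0} ⋯ ∮_{|z_K|=r (K-1)} f(z) dz_K ⋯ dz₁`. -/
noncomputable def multiCircle : (K : ℕ) → (Fin K → ℝ) → ((Fin K → ℂ) → ℂ) → ℂ
  | 0, _, f => f (fun i => i.elim0)
  | K + 1, r, f =>
      ∮ z in C(0, r 0), multiCircle K (fun i => r i.succ) (fun zs => f (Fin.cons z zs))

open Complex Metric Finset

theorem multiCircle_const_mul : ∀ (K : ℕ) (r : Fin K → ℝ) (c : ℂ) (f : (Fin K → ℂ) → ℂ),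
    multiCircle K r (fun z => c * f z) = c * multiCircle K r f
  | 0, _, _, _ => rfl
  | K + 1, r, c, f => by
      simp only [multiCircle, multiCircle_const_mul K, circleIntegral.integral_const_mul]

section NestedRadii

variable {θ : ℝ} {K : ℕ}

theorem nested_radius_add_mul_le (r : Fin (K + 1) → ℝ)
    (hnested : ∀ (i : Fin (K + 1)) (h : (i : ℕ) + 1 < K + 1), r ⟨(i : ℕ) + 1, h⟩ + θ < r i) :
    ∀ j : Fin (K + 1), r j + j * θ ≤ r 0 := by
  refine Fin.induction (by simp) fun i ih => ?_
  have hstep := hnested i.castSucc (by simp)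
  simp only [Fin.val_castSucc] at ih hstep
  simp only [Fin.val_succ, Nat.cast_add, Nat.cast_one]
  exact le_of_lt (by linarith [show r i.succ = r ⟨i + 1, by omega⟩ from rfl])

theorem nested_radius_mul_lt (r : Fin (K + 1) → ℝ) (hr : ∀ i, 0 < r i)
    (hnested : ∀ (i : Fin (K + 1)) (h : (i : ℕ) + 1 < K + 1), r ⟨(i : ℕ) + 1, h⟩ + θ < r i) :
    K * θ < r 0 := by
  have := nested_radius_add_mul_le r hnested (Fin.last K)
  simp only [Fin.val_last] at this
  linarith [hr (Fin.last K)]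

theorem nested_radius_succ_add_lt (hθ : 0 < θ) (r : Fin (K + 1) → ℝ)
    (hnested : ∀ (i : Fin (K + 1)) (h : (i : ℕ) + 1 < K + 1), r ⟨(i : ℕ) + 1, h⟩ + θ < r i)
    (j : Fin K) : r j.succ + θ < r 0 := by
  have hstep := hnested j.castSucc (by simp)
  have hbound := nested_radius_add_mul_le r hnested j.castSucc
  simp only [Fin.val_castSucc] at hstep hbound
  have : 0 ≤ (j : ℝ) * θ := by positivity
  linarith [show r j.succ = r ⟨j + 1, by omega⟩ from rfl]

end NestedRadii

noncomputable def pairFactor (θ : ℝ) (u v : ℂ) : ℂ := (u - v) / (u - v - θ)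

noncomputable def spectatorIntegrand (θ : ℝ) {m K : ℕ} (w : Fin m → ℂ) (z : Fin K → ℂ) : ℂ :=
  (∏ A, ∏ B ∈ univ.filter (fun B => A < B), pairFactor θ (z A) (z B)) *
    (∏ a, ∏ B, pairFactor θ (w a) (z B)) * ∏ j, (z j)⁻¹

theorem spectatorIntegrand_cons (θ : ℝ) {m K : ℕ} (w : Fin m → ℂ) (z : ℂ) (zs : Fin K → ℂ) :
    spectatorIntegrand θ w (Fin.cons z zs) =
      z⁻¹ * (∏ a, pairFactor θ (w a) z) * spectatorIntegrand θ (Fin.cons z w) zs := by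
  simp only [spectatorIntegrand, prod_filter, Fin.prod_univ_succ, Fin.cons_zero, Fin.cons_succ,
    Fin.succ_pos, if_true, Fin.succ_lt_succ_iff, Fin.not_lt_zero, if_false,
    one_mul, prod_mul_distrib]
  ring

theorem spectatorIntegrand_elim0 (θ : ℝ) {K : ℕ} (z : Fin K → ℂ) :
    spectatorIntegrand θ (Fin.elim0 : Fin 0 → ℂ) z =
      (∏ A, ∏ B ∈ univ.filter (fun B => A < B), (z A - z B) / (z A - z B - θ)) * ∏ j, (z j)⁻¹ := by
  simp [spectatorIntegrand, pairFactor]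

theorem differentiableOn_prod_pairFactor {θ R : ℝ} (hθ : 0 < θ) {m : ℕ} (w : Fin m → ℂ)
    (hw : ∀ a, R + θ < ‖w a‖) :
    DifferentiableOn ℂ (fun z => ∏ a, pairFactor θ (w a) z) (closedBall 0 R) := by
  intro x hx
  refine (DifferentiableAt.fun_finsetProd fun a _ => ?_).differentiableWithinAt
  refine DifferentiableAt.div (by fun_prop) (by fun_prop) fun h => ?_
  have hnorm : ‖w a‖ ≤ R + θ := by
    calc ‖w a‖ = ‖x + θ‖ := by rw [show w a = x + θ by linear_combination h]
      _ ≤ ‖x‖ + ‖(θ : ℂ)‖ := norm_add_le _ _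
      _ ≤ R + θ := by
        rw [norm_real, Real.norm_of_nonneg hθ.le]
        linarith [mem_closedBall_zero_iff.mp hx]
  linarith [hw a]

theorem circleIntegral_inv_sub_mul_prod_pairFactor {θ R : ℝ} (hθ : 0 < θ) {m : ℕ}
    (w : Fin m → ℂ) (hw : ∀ a, R + θ < ‖w a‖) {c : ℂ} (hc : ‖c‖ < R) :
    (∮ z in C(0, R), (z - c)⁻¹ * ∏ a, pairFactor θ (w a) z) =
      2 * Real.pi * I * ∏ a, pairFactor θ (w a) c :=
  (differentiableOn_prod_pairFactor hθ w hw).circleIntegral_sub_inv_smul (mem_ball_zero_iff.mpr hc)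

theorem sub_ofReal_ne_zero {w : ℂ} {x : ℝ} (hx : 0 ≤ x) (h : x < ‖w‖) : w - x ≠ 0 := by
  rw [sub_ne_zero]
  rintro rfl
  rw [norm_real, Real.norm_of_nonneg hx] at h
  exact h.false

theorem multiCircle_spectatorIntegrand {θ : ℝ} (hθ : 0 < θ) :
    ∀ (K : ℕ) (r : Fin K → ℝ), (∀ i, 0 < r i) →
    (∀ (i : Fin K) (h : (i : ℕ) + 1 < K), r ⟨(i : ℕ) + 1, h⟩ + θ < r i) →
    ∀ {m : ℕ} (w : Fin m → ℂ), (∀ a, K * θ < ‖w a‖) → (∀ a j, r j + θ < ‖w a‖) →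
    multiCircle K r (spectatorIntegrand θ w) =
      (2 * Real.pi * I) ^ K * ∏ a, w a / (w a - ((K * θ : ℝ) : ℂ))
  | 0, _, _, _, m, w, hwK, _ => by
      have hw0 : ∀ a, w a ≠ 0 := fun a => norm_pos_iff.mp (by simpa using hwK a)
      simp [multiCircle, spectatorIntegrand, div_self, hw0]
  | K + 1, r, hr, hnested, m, w, hwK, hwr => by
      set P : ℂ → ℂ := fun z => ∏ a, pairFactor θ (w a) z
      set C : ℂ := (2 * Real.pi * I) ^ K * ∏ a, w a / (w a - ((K * θ : ℝ) : ℂ))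
      have hKθ : K * θ < r 0 := nested_radius_mul_lt r hr hnested
      have hKθ_nonneg : 0 ≤ (K : ℝ) * θ := by positivity
      have hwK' : ∀ a, K * θ < ‖w a‖ := fun a => by
        have := hwK a
        push_cast at this
        linarith
      have hinner : Set.EqOn
          (fun z => multiCircle K (fun i => r i.succ) fun zs =>
            spectatorIntegrand θ w (Fin.cons z zs))
          (fun z => C * ((z - ((K * θ : ℝ) : ℂ))⁻¹ * P z)) (sphere 0 (r 0)) := by
        intro z hz
        have hz : ‖z‖ = r 0 := mem_sphere_zero_iff_norm.mp hz
        have hz0 : z ≠ 0 := norm_pos_iff.mp (by linarith [hr 0])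
        have hzK : z - ((K * θ : ℝ) : ℂ) ≠ 0 := sub_ofReal_ne_zero hKθ_nonneg (by linarith)
        have hspect : ∀ a, K * θ < ‖(Fin.cons z w : Fin (m + 1) → ℂ) a‖ := Fin.cases
          (by simpa [hz] using hKθ) fun a => by simpa using hwK' a
        have hspect' :
            ∀ a (j : Fin K), r j.succ + θ < ‖(Fin.cons z w : Fin (m + 1) → ℂ) a‖ := Fin.cases
          (fun (j : Fin K) => by simpa [hz] using nested_radius_succ_add_lt hθ r hnested j)
          fun a (j : Fin K) => by simpa using hwr a j.succ
        simp only [spectatorIntegrand_cons, multiCircle_const_mul]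
        rw [multiCircle_spectatorIntegrand hθ K _ (fun i => hr i.succ)
          (fun i h => hnested i.succ (by simpa using h)) _ hspect hspect', Fin.prod_univ_succ]
        simp only [Fin.cons_zero, Fin.cons_succ, C, P]
        field_simp
      have htelescope : ∀ a, w a / (w a - ((K * θ : ℝ) : ℂ)) * pairFactor θ (w a) ((K * θ : ℝ) : ℂ)
          = w a / (w a - (((K + 1 : ℕ) * θ : ℝ) : ℂ)) := fun a => by
        rw [pairFactor, div_mul_div_cancel₀ (sub_ofReal_ne_zero hKθ_nonneg (hwK' a))]
        push_cast
        ring_nf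
      rw [multiCircle, circleIntegral.integral_congr (hr 0).le hinner,
        circleIntegral.integral_const_mul, circleIntegral_inv_sub_mul_prod_pairFactor hθ w
          (fun a => hwr a 0) (by rwa [norm_real, Real.norm_of_nonneg hKθ_nonneg])]
      simp only [C, pow_succ, ← htelescope, prod_mul_distrib]
      ring

theorem multiCircle_residue_eval_general
    (θ : ℝ) (hθ : 0 < θ) (K : ℕ)
    (r : Fin K → ℝ) (hr : ∀ i, 0 < r i)
    (hnested : ∀ (i : Fin K) (h : (i : ℕ) + 1 < K), r ⟨(i : ℕ) + 1, h⟩ + θ < r i) :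
    ((2 * (Real.pi : ℂ) * Complex.I) ^ K)⁻¹ *
        multiCircle K r (fun z =>
          (∏ A : Fin K, ∏ B ∈ Finset.univ.filter (fun B => A < B),
              (z A - z B) / (z A - z B - (θ : ℂ))) *
            ∏ j, (z j)⁻¹) = 1 := by
  have h := multiCircle_spectatorIntegrand hθ K r hr hnested (Fin.elim0 : Fin 0 → ℂ)
    finZeroElim finZeroElim
  rw [show spectatorIntegrand θ Fin.elim0 = _ from funext (spectatorIntegrand_elim0 θ)] at h
  rw [h, univ_eq_empty, prod_empty, mul_one, inv_mul_cancel₀ (pow_ne_zero _ two_pi_I_ne_zero)]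

/-- Evaluation by iterated residues of the contour integral verifying the
`t = 0`, `n⃗ = (1,…,1)` initial condition of the moment formula for the
strict-weak polymer. -/
theorem multiCircle_residue_eval
    (θ : ℝ) (hθ : 0 < θ) (K : ℕ) (hK : 1 ≤ K)
    (r : Fin K → ℝ) (hr : ∀ i, 0 < r i)
    (hnested : ∀ (i : Fin K) (h : (i : ℕ) + 1 < K), r ⟨(i : ℕ) + 1, h⟩ + θ < r i) :
    ((2 * (Real.pi : ℂ) * Complex.I) ^ K)⁻¹ *
        multiCircle K r (fun z =>
          (∏ A : Fin K, ∏ B ∈ Finset.univ.filter (fun B => A < B),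
              (z A - z B) / (z A - z B - (θ : ℂ))) *
            ∏ j, (z j)⁻¹) = 1 :=
  multiCircle_residue_eval_general θ hθ K r hr hnested
end

section
/- Fix β, k, θ > 0. Let (U, V, Y) be independent positive random variables with U ~ Gamma(β+k, θ), V^{-1} ~ Gamma(β, θ), and Y ~ Gamma(k, θ). Define U' = Y + 1/V, V' = (YV + 1)/U, and Y' = UVY/(YV + 1). Then the random vector (U', V', Y') has the same joint distribution as (U, V, Y); in particular U', V', Y' are independent with U' ~ Gamma(β+k, θ), (V')^{-1} ~ Gamma(β, θ), Y' ~ Gamma(k, θ). -/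
/-!
Put `W = V⁻¹`. Then `(U, W, Y)` has law `Γ(β+k) ⊗ Γ(β) ⊗ Γ(k)` (all with rate `1/θ`), and in
the coordinates `(u, w, y)` the map of the theorem becomes the involution
`S(u, w, y) = (w + y, u w / (w + y), u y / (w + y))` of the positive octant, the "beta-gamma
algebra" map. Its Jacobian determinant is `-u / (w + y)`, and the product `f` of the three gamma
densities satisfies `u / (w + y) * f (S p) = f p`: the exponentials agree because
`(w + y) + u w / (w + y) + u y / (w + y) = u + w + y`, and the powers of `w + y` cancel.
By the change of variables formula, `S` therefore preserves the product law.
-/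

open MeasureTheory ProbabilityTheory Real Set
open scoped ENNReal

def LinearEquiv.finThreeArrow (R M : Type*) [Semiring R] [AddCommMonoid M] [Module R M] :
    (Fin 3 → M) ≃ₗ[R] M × M × M where
  toFun f := (f 0, f 1, f 2)
  invFun p := ![p.1, p.2.1, p.2.2]
  map_add' _ _ := rfl
  map_smul' _ _ := rfl
  left_inv f := by ext i; fin_cases i <;> rfl
  right_inv _ := rfl

section Triple

variable {R : Type*} [CommRing R]

def Matrix.toLinTriple (A : Matrix (Fin 3) (Fin 3) R) : (R × R × R) →ₗ[R] R × R × R :=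
  (LinearEquiv.finThreeArrow R R).toLinearMap ∘ₗ A.toLin' ∘ₗ
    (LinearEquiv.finThreeArrow R R).symm.toLinearMap

@[simp]
lemma Matrix.toLinTriple_apply (A : Matrix (Fin 3) (Fin 3) R) (p : R × R × R) :
    A.toLinTriple p = (A 0 0 * p.1 + A 0 1 * p.2.1 + A 0 2 * p.2.2,
      A 1 0 * p.1 + A 1 1 * p.2.1 + A 1 2 * p.2.2, A 2 0 * p.1 + A 2 1 * p.2.1 + A 2 2 * p.2.2) := by
  change ((A.mulVec ![p.1, p.2.1, p.2.2]) 0, (A.mulVec ![p.1, p.2.1, p.2.2]) 1,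
    (A.mulVec ![p.1, p.2.1, p.2.2]) 2) = _
  simp [Matrix.mulVec, dotProduct, Fin.sum_univ_three]

lemma Matrix.det_toLinTriple (A : Matrix (Fin 3) (Fin 3) R) :
    LinearMap.det A.toLinTriple = A.det := by
  rw [Matrix.toLinTriple, LinearMap.det_conj, LinearMap.det_toLin']

end Triple

theorem map_withDensity_eq_self_of_abs_det_fderiv_mul {E : Type*} [NormedAddCommGroup E]
    [NormedSpace ℝ E] [FiniteDimensional ℝ E] [MeasurableSpace E] [BorelSpace E]
    (μ : Measure E) [μ.IsAddHaarMeasure] {s : Set E} {S : E → E} {S' : E → E →L[ℝ] E}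
    {F : E → ℝ≥0∞} (hs : MeasurableSet s) (hSm : Measurable S)
    (hS' : ∀ x ∈ s, HasFDerivWithinAt S (S' x) s x) (hbij : BijOn S s s)
    (hF : ∀ᵐ x ∂μ.withDensity F, x ∈ s)
    (hjac : ∀ x ∈ s, ENNReal.ofReal |(S' x).det| * F (S x) = F x) :
    (μ.withDensity F).map S = μ.withDensity F := by
  have hrestrict : μ.withDensity F = (μ.restrict s).withDensity F := by
    rw [← restrict_withDensity hs, Measure.restrict_eq_self_of_ae_mem hF]
  have hcov := lintegral_image_eq_lintegral_abs_det_fderiv_mul μ hs hS' hbij.injOn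
  rw [hbij.image_eq] at hcov
  ext A hA
  rw [Measure.map_apply hSm hA, hrestrict, withDensity_apply _ hA, withDensity_apply _ (hSm hA),
    ← lintegral_indicator hA, ← lintegral_indicator (hSm hA), hcov (A.indicator F)]
  refine setLIntegral_congr_fun hs fun x hx => ?_
  by_cases hxA : S x ∈ A
  · rw [indicator_of_mem hxA, indicator_of_mem (show x ∈ S ⁻¹' A from hxA), hjac x hx]
  · rw [indicator_of_notMem hxA, indicator_of_notMem (show x ∉ S ⁻¹' A from hxA), mul_zero]

def posOctant : Set (ℝ × ℝ × ℝ) := Ioi 0 ×ˢ Ioi 0 ×ˢ Ioi 0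

lemma measurableSet_posOctant : MeasurableSet posOctant :=
  measurableSet_Ioi.prod (measurableSet_Ioi.prod measurableSet_Ioi)

lemma ae_mem_posOctant {μ₁ μ₂ μ₃ : Measure ℝ} [SFinite μ₂] [SFinite μ₃]
    (h₁ : ∀ᵐ x ∂μ₁, 0 < x) (h₂ : ∀ᵐ x ∂μ₂, 0 < x) (h₃ : ∀ᵐ x ∂μ₃, 0 < x) :
    ∀ᵐ p ∂μ₁.prod (μ₂.prod μ₃), p ∈ posOctant := by
  have h₂₃ : ∀ᵐ q ∂μ₂.prod μ₃, 0 < q.1 ∧ 0 < q.2 :=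
    (Measure.quasiMeasurePreserving_fst.ae h₂).and (Measure.quasiMeasurePreserving_snd.ae h₃)
  exact (Measure.quasiMeasurePreserving_fst.ae h₁).and (Measure.quasiMeasurePreserving_snd.ae h₂₃)

noncomputable def betaGammaMap (p : ℝ × ℝ × ℝ) : ℝ × ℝ × ℝ :=
  (p.2.1 + p.2.2, p.1 * p.2.1 / (p.2.1 + p.2.2), p.1 * p.2.2 / (p.2.1 + p.2.2))

lemma measurable_betaGammaMap : Measurable betaGammaMap := by
  unfold betaGammaMap
  fun_prop

lemma mapsTo_betaGammaMap : MapsTo betaGammaMap posOctant posOctant := by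
  rintro ⟨u, w, y⟩ ⟨hu, hw, hy⟩
  simp only [posOctant, betaGammaMap, mem_prod, mem_Ioi] at hu hw hy ⊢
  exact ⟨by positivity, by positivity, by positivity⟩

lemma betaGammaMap_betaGammaMap {p : ℝ × ℝ × ℝ} (hp : p ∈ posOctant) :
    betaGammaMap (betaGammaMap p) = p := by
  obtain ⟨u, w, y⟩ := p
  obtain ⟨hu, hw, hy⟩ : 0 < u ∧ 0 < w ∧ 0 < y := hp
  have hs : w + y ≠ 0 := by positivity
  simp only [betaGammaMap, Prod.mk.injEq]
  refine ⟨?_, ?_, ?_⟩ <;> field_simp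

lemma bijOn_betaGammaMap : BijOn betaGammaMap posOctant posOctant :=
  InvOn.bijOn ⟨fun _ => betaGammaMap_betaGammaMap, fun _ => betaGammaMap_betaGammaMap⟩
    mapsTo_betaGammaMap mapsTo_betaGammaMap

noncomputable def betaGammaJacobian (p : ℝ × ℝ × ℝ) : Matrix (Fin 3) (Fin 3) ℝ :=
  let s := p.2.1 + p.2.2
  !![0, 1, 1;
    p.2.1 / s, p.1 * p.2.2 / s ^ 2, -(p.1 * p.2.1) / s ^ 2;
    p.2.2 / s, -(p.1 * p.2.2) / s ^ 2, p.1 * p.2.1 / s ^ 2]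

lemma det_betaGammaJacobian {p : ℝ × ℝ × ℝ} (hp : p.2.1 + p.2.2 ≠ 0) :
    (betaGammaJacobian p).det = -(p.1 / (p.2.1 + p.2.2)) := by
  rw [betaGammaJacobian, Matrix.det_fin_three]
  simp only [Matrix.of_apply, Matrix.cons_val', Matrix.cons_val_zero, Matrix.cons_val_fin_one,
    Matrix.cons_val_one, zero_mul, Matrix.cons_val, sub_self, one_mul, zero_sub]
  field_simp
  ring

lemma hasFDerivAt_betaGammaMap {p : ℝ × ℝ × ℝ} (hp : p.2.1 + p.2.2 ≠ 0) :
    HasFDerivAt betaGammaMap (betaGammaJacobian p).toLinTriple.toContinuousLinearMap p := by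
  have hsnd : HasFDerivAt (Prod.snd : ℝ × ℝ × ℝ → ℝ × ℝ) (ContinuousLinearMap.snd ℝ ℝ (ℝ × ℝ)) p :=
    hasFDerivAt_snd
  have hs := hsnd.fst.fun_add hsnd.snd
  have hinv := (hasFDerivAt_inv hp).comp p hs
  have h2 := (hasFDerivAt_fst.fun_mul hsnd.fst).fun_mul hinv
  have h3 := (hasFDerivAt_fst.fun_mul hsnd.snd).fun_mul hinv
  refine (hs.prodMk (h2.prodMk h3)).congr_fderiv (ContinuousLinearMap.ext fun q => ?_)
  simp only [ContinuousLinearMap.comp_add, smul_add, Function.comp_apply,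
    ContinuousLinearMap.prod_apply, add_apply, ContinuousLinearMap.comp_apply,
    ContinuousLinearMap.coe_snd', ContinuousLinearMap.coe_fst', smul_apply,
    ContinuousLinearMap.toSpanSingleton_apply, smul_eq_mul, mul_neg, betaGammaJacobian,
    LinearMap.coe_toContinuousLinearMap', Matrix.toLinTriple_apply, Matrix.of_apply,
    Matrix.cons_val', Matrix.cons_val_zero, Matrix.cons_val_fin_one, zero_mul, Matrix.cons_val_one,
    one_mul, zero_add, Matrix.cons_val, Prod.mk.injEq, true_and]
  constructor <;> field_simp <;> ring

lemma prodMap_inv_betaGammaMap {u v y : ℝ} (hv : v ≠ 0) :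
    Prod.map id (Prod.map Inv.inv id) (betaGammaMap (u, v⁻¹, y)) =
      (y + v⁻¹, (y * v + 1) / u, u * v * y / (y * v + 1)) := by
  simp only [betaGammaMap, Prod.map_apply, id, Prod.mk.injEq]
  refine ⟨add_comm _ _, ?_, ?_⟩
  · field_simp
    ring
  · field_simp
    ring

namespace ProbabilityTheory

instance sFinite_gammaMeasure (a r : ℝ) : SFinite (gammaMeasure a r) := by
  unfold gammaMeasure
  infer_instance

lemma ae_pos_gammaMeasure (a r : ℝ) : ∀ᵐ x ∂gammaMeasure a r, 0 < x := by
  have hIic : gammaMeasure a r (Iic 0) = 0 := by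
    rw [gammaMeasure, withDensity_apply _ measurableSet_Iic,
      Measure.restrict_congr_set Iio_ae_eq_Iic.symm]
    exact lintegral_gammaPDF_of_nonpos le_rfl
  filter_upwards [measure_eq_zero_iff_ae_notMem.1 hIic] with x hx using not_le.1 hx

lemma gammaPDFReal_of_pos {a r x : ℝ} (hx : 0 < x) :
    gammaPDFReal a r x = r ^ a / Gamma a * (x ^ a / x) * exp (-(r * x)) := by
  rw [gammaPDFReal, if_pos hx.le, rpow_sub_one hx.ne']

lemma gammaPDFReal_betaGammaMap {β k r u w y : ℝ} (hu : 0 < u) (hw : 0 < w) (hy : 0 < y) :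
    u / (w + y) * (gammaPDFReal (β + k) r (w + y) *
      (gammaPDFReal β r (u * w / (w + y)) * gammaPDFReal k r (u * y / (w + y)))) =
    gammaPDFReal (β + k) r u * (gammaPDFReal β r w * gammaPDFReal k r y) := by
  have hs : 0 < w + y := by positivity
  have hpow : u / (w + y) * ((w + y) ^ (β + k) / (w + y)) *
      ((u * w / (w + y)) ^ β / (u * w / (w + y))) * ((u * y / (w + y)) ^ k / (u * y / (w + y))) =
      u ^ (β + k) / u * (w ^ β / w) * (y ^ k / y) := by
    rw [div_rpow (by positivity) hs.le, div_rpow (by positivity) hs.le, mul_rpow hu.le hw.le,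
      mul_rpow hu.le hy.le, rpow_add hu, rpow_add hs]
    field_simp
  have hexp : exp (-(r * (w + y))) * exp (-(r * (u * w / (w + y)))) *
      exp (-(r * (u * y / (w + y)))) = exp (-(r * u)) * exp (-(r * w)) * exp (-(r * y)) := by
    simp only [← exp_add]
    congr 1
    field_simp
    ring
  rw [gammaPDFReal_of_pos hu, gammaPDFReal_of_pos hw, gammaPDFReal_of_pos hy,
    gammaPDFReal_of_pos hs, gammaPDFReal_of_pos (by positivity),
    gammaPDFReal_of_pos (by positivity)]
  calc _ = r ^ (β + k) / Gamma (β + k) * (r ^ β / Gamma β) * (r ^ k / Gamma k) *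
        (u / (w + y) * ((w + y) ^ (β + k) / (w + y)) *
          ((u * w / (w + y)) ^ β / (u * w / (w + y))) *
          ((u * y / (w + y)) ^ k / (u * y / (w + y)))) *
        (exp (-(r * (w + y))) * exp (-(r * (u * w / (w + y)))) *
          exp (-(r * (u * y / (w + y))))) := by ring
    _ = r ^ (β + k) / Gamma (β + k) * (r ^ β / Gamma β) * (r ^ k / Gamma k) *
        (u ^ (β + k) / u * (w ^ β / w) * (y ^ k / y)) *
        (exp (-(r * u)) * exp (-(r * w)) * exp (-(r * y))) := by rw [hpow, hexp]
    _ = _ := by ring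

noncomputable def gammaProdPDF (a b c r : ℝ) (p : ℝ × ℝ × ℝ) : ℝ≥0∞ :=
  gammaPDF a r p.1 * (gammaPDF b r p.2.1 * gammaPDF c r p.2.2)

lemma gammaMeasure_prod_prod (a b c r : ℝ) :
    (gammaMeasure a r).prod ((gammaMeasure b r).prod (gammaMeasure c r)) =
      volume.withDensity (gammaProdPDF a b c r) := by
  have hm (a : ℝ) : Measurable (gammaPDF a r) := (measurable_gammaPDFReal a r).ennreal_ofReal
  rw [gammaMeasure, gammaMeasure, gammaMeasure, prod_withDensity (hm b) (hm c),
    prod_withDensity (hm a) (by fun_prop), ← Measure.volume_eq_prod, ← Measure.volume_eq_prod]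
  rfl

lemma abs_det_betaGammaJacobian_mul_gammaProdPDF {β k r : ℝ} (hβ : 0 < β) (hk : 0 < k)
    (hr : 0 < r) {p : ℝ × ℝ × ℝ} (hp : p ∈ posOctant) :
    ENNReal.ofReal |(betaGammaJacobian p).det| * gammaProdPDF (β + k) β k r (betaGammaMap p) =
      gammaProdPDF (β + k) β k r p := by
  obtain ⟨u, w, y⟩ := p
  obtain ⟨hu, hw, hy⟩ : 0 < u ∧ 0 < w ∧ 0 < y := hp
  have hβk : 0 < β + k := by positivity
  rw [det_betaGammaJacobian (by positivity), abs_neg, abs_of_pos (by positivity)]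
  simp only [gammaProdPDF, betaGammaMap, gammaPDF]
  rw [← ENNReal.ofReal_mul (gammaPDFReal_nonneg hβ hr _),
    ← ENNReal.ofReal_mul (gammaPDFReal_nonneg hβk hr _), ← ENNReal.ofReal_mul (by positivity),
    ← ENNReal.ofReal_mul (gammaPDFReal_nonneg hβ hr _),
    ← ENNReal.ofReal_mul (gammaPDFReal_nonneg hβk hr _), gammaPDFReal_betaGammaMap hu hw hy]

theorem map_betaGammaMap_gammaMeasure_prod {β k r : ℝ} (hβ : 0 < β) (hk : 0 < k) (hr : 0 < r) :
    ((gammaMeasure (β + k) r).prod ((gammaMeasure β r).prod (gammaMeasure k r))).map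
      betaGammaMap = (gammaMeasure (β + k) r).prod ((gammaMeasure β r).prod (gammaMeasure k r)) := by
  have hpos := ae_mem_posOctant (ae_pos_gammaMeasure (β + k) r) (ae_pos_gammaMeasure β r)
    (ae_pos_gammaMeasure k r)
  rw [gammaMeasure_prod_prod] at hpos ⊢
  have : (volume : Measure (ℝ × ℝ × ℝ)).IsAddHaarMeasure := Measure.prod.instIsAddHaarMeasure _ _
  refine map_withDensity_eq_self_of_abs_det_fderiv_mul volume measurableSet_posOctant
    measurable_betaGammaMap (fun p hp => (hasFDerivAt_betaGammaMap ?_).hasFDerivWithinAt)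
    bijOn_betaGammaMap hpos fun p hp => ?_
  · obtain ⟨hu, hw, hy⟩ : 0 < p.1 ∧ 0 < p.2.1 ∧ 0 < p.2.2 := hp
    positivity
  · rw [LinearMap.det_toContinuousLinearMap, Matrix.det_toLinTriple]
    exact abs_det_betaGammaJacobian_mul_gammaProdPDF hβ hk hr hp

lemma iIndepFun.map_prodMk_prodMk {Ω β : Type*} [MeasurableSpace Ω] [MeasurableSpace β]
    {P : Measure Ω} [IsFiniteMeasure P] {X₀ X₁ X₂ : Ω → β}
    (h : iIndepFun ![X₀, X₁, X₂] P) (h₀ : Measurable X₀) (h₁ : Measurable X₁)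
    (h₂ : Measurable X₂) :
    P.map (fun ω => (X₀ ω, X₁ ω, X₂ ω)) = (P.map X₀).prod ((P.map X₁).prod (P.map X₂)) := by
  have hmeas : ∀ i, Measurable (![X₀, X₁, X₂] i) := fun i => by fin_cases i <;> assumption
  have h₁₂ : IndepFun X₁ X₂ P := h.indepFun (i := 1) (j := 2) (by decide)
  have h₀₁₂ : IndepFun X₀ (fun ω => (X₁ ω, X₂ ω)) P :=
    (h.indepFun_prodMk hmeas 1 2 0 (by decide) (by decide)).symm
  rw [h₀₁₂.map_prod_eq_prod_map_map h₀.aemeasurable (h₁.prodMk h₂).aemeasurable,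
    h₁₂.map_prod_eq_prod_map_map h₁.aemeasurable h₂.aemeasurable]

end ProbabilityTheory

theorem betaGamma_invariance_general
    {Ω : Type*} [MeasurableSpace Ω] (P : Measure Ω) [IsProbabilityMeasure P]
    (β k θ : ℝ) (hβ : 0 < β) (hk : 0 < k) (hθ : 0 < θ)
    (U V Y : Ω → ℝ)
    (hUmeas : Measurable U) (hVmeas : Measurable V) (hYmeas : Measurable Y)
    (hindep : iIndepFun ![U, V, Y] P)
    (hU : P.map U = gammaMeasure (β + k) (1 / θ))
    (hV : P.map (fun ω => (V ω)⁻¹) = gammaMeasure β (1 / θ))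
    (hY : P.map Y = gammaMeasure k (1 / θ)) :
    P.map (fun ω =>
        (Y ω + (V ω)⁻¹, (Y ω * V ω + 1) / U ω, U ω * V ω * Y ω / (Y ω * V ω + 1))) =
      P.map (fun ω => (U ω, V ω, Y ω)) := by
  set X : Ω → ℝ × ℝ × ℝ := fun ω => (U ω, (V ω)⁻¹, Y ω)
  set φ : ℝ × ℝ × ℝ → ℝ × ℝ × ℝ := Prod.map id (Prod.map Inv.inv id)
  have hX : Measurable X := hUmeas.prodMk (hVmeas.inv.prodMk hYmeas)
  have hφ : Measurable φ := measurable_id.prodMap (measurable_inv.prodMap measurable_id)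
  have hindepX : iIndepFun ![U, fun ω => (V ω)⁻¹, Y] P := by
    convert hindep.comp ![id, Inv.inv, id]
      (fun i => by fin_cases i; exacts [measurable_id, measurable_inv, measurable_id]) using 1
    funext i
    fin_cases i <;> rfl
  have hlaw : P.map X = (gammaMeasure (β + k) (1 / θ)).prod
      ((gammaMeasure β (1 / θ)).prod (gammaMeasure k (1 / θ))) := by
    rw [hindepX.map_prodMk_prodMk hUmeas hVmeas.inv hYmeas, hU, hV, hY]
  have hV0 : ∀ᵐ ω ∂P, V ω ≠ 0 := by
    filter_upwards [ae_of_ae_map hVmeas.inv.aemeasurable (hV ▸ ae_pos_gammaMeasure β (1 / θ))]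
      with ω hω using (inv_pos.1 hω).ne'
  calc _ = P.map (φ ∘ betaGammaMap ∘ X) :=
        Measure.map_congr (hV0.mono fun ω hω => (prodMap_inv_betaGammaMap hω).symm)
    _ = ((P.map X).map betaGammaMap).map φ := by
        rw [Measure.map_map measurable_betaGammaMap hX,
          Measure.map_map hφ (measurable_betaGammaMap.comp hX)]
    _ = (P.map X).map φ := by rw [hlaw, map_betaGammaMap_gammaMeasure_prod hβ hk (by positivity)]
    _ = _ := by
        rw [Measure.map_map hφ hX]
        congr 1 with ω <;> simp [X, φ]

/-- Beta-gamma algebra invariance: if `U ~ Gamma(β+k,θ)`, `V⁻¹ ~ Gamma(β,θ)`,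
`Y ~ Gamma(k,θ)` are independent and positive, then
`(U', V', Y') = (Y + 1/V, (YV+1)/U, UVY/(YV+1))` has the same joint distribution
as `(U, V, Y)`. -/
theorem betaGamma_invariance
    {Ω : Type*} [MeasurableSpace Ω] (P : Measure Ω) [IsProbabilityMeasure P]
    (β k θ : ℝ) (hβ : 0 < β) (hk : 0 < k) (hθ : 0 < θ)
    (U V Y : Ω → ℝ)
    (hUmeas : Measurable U) (hVmeas : Measurable V) (hYmeas : Measurable Y)
    (hpos : ∀ᵐ ω ∂P, 0 < U ω ∧ 0 < V ω ∧ 0 < Y ω)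
    (hindep : iIndepFun ![U, V, Y] P)
    (hU : P.map U = gammaMeasure (β + k) (1 / θ))
    (hV : P.map (fun ω => (V ω)⁻¹) = gammaMeasure β (1 / θ))
    (hY : P.map Y = gammaMeasure k (1 / θ)) :
    P.map (fun ω =>
        (Y ω + (V ω)⁻¹, (Y ω * V ω + 1) / U ω, U ω * V ω * Y ω / (Y ω * V ω + 1))) =
      P.map (fun ω => (U ω, V ω, Y ω)) :=
  betaGamma_invariance_general P β k θ hβ hk hθ U V Y hUmeas hVmeas hYmeas hindep hU hV hY
end
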